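/- arXiv:2109.07875 — 3 statements merged into one kernel-verified Lean document; each statement's English description precedes it below -/
import Mathlib

section
/- The number of words of length k over the alphabet {1, 2, …, k+1} that contain at least one occurrence of the letter 1 and satisfy properties P1, P2 and P3 equals C_{k+1} − C_k, where C_j denotes the j-th Catalan number. -/
/-- Property P1: if a letter `s ≥ 3` occurs, then every letter `t` with `2 ≤ t < s`
occurs before the first occurrence of `s`. -/
def WordP1 {k : ℕ} (w : Fin k → ℕ) : Prop :=
  ∀ i : Fin k, ∀ t : ℕ, 2 ≤ t → t < w i → ∃ j : Fin k, j < i ∧ w j = t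

/-- Property P2: no interlocking subsequence `a, b, a, b` with `a ≠ b`. -/
def WordP2 {k : ℕ} (w : Fin k → ℕ) : Prop :=
  ∀ i1 i2 i3 i4 : Fin k, i1 < i2 → i2 < i3 → i3 < i4 →
    w i1 = w i3 → w i2 = w i4 → w i1 = w i2

/-- Property P3: no subsequence `a, 1, a` with `a ≠ 1`. -/
def WordP3 {k : ℕ} (w : Fin k → ℕ) : Prop :=
  ∀ i1 i2 i3 : Fin k, i1 < i2 → i2 < i3 → w i1 = w i3 → w i2 = 1 → w i1 = 1


namespace CatWords


def LP1 (l : List ℕ) : Prop :=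
  ∀ i t : ℕ, 2 ≤ t → t < l.getD i 0 → ∃ j, j < i ∧ l.getD j 0 = t

def LP2 (l : List ℕ) : Prop :=
  ∀ i1 i2 i3 i4 : ℕ, i1 < i2 → i2 < i3 → i3 < i4 → i4 < l.length →
    l.getD i1 0 = l.getD i3 0 → l.getD i2 0 = l.getD i4 0 → l.getD i1 0 = l.getD i2 0

def LP3 (l : List ℕ) : Prop :=
  ∀ i1 i2 i3 : ℕ, i1 < i2 → i2 < i3 → i3 < l.length →
    l.getD i1 0 = l.getD i3 0 → l.getD i2 0 = 1 → l.getD i1 0 = 1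

def Good (l : List ℕ) : Prop := (∀ x ∈ l, 2 ≤ x) ∧ LP1 l ∧ LP2 l

def GoodW (l : List ℕ) : Prop := (∀ x ∈ l, 1 ≤ x) ∧ LP1 l ∧ LP2 l ∧ LP3 l

/-! ### getD helpers -/

theorem getD_mem {l : List ℕ} {i : ℕ} (h : i < l.length) : l.getD i 0 ∈ l := by
  rw [List.getD_eq_getElem _ _ h]; exact List.getElem_mem h

theorem mem_getD {l : List ℕ} {x : ℕ} (h : x ∈ l) : ∃ i, i < l.length ∧ l.getD i 0 = x := by
  obtain ⟨i, hi, rfl⟩ := List.mem_iff_getElem.1 h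
  exact ⟨i, hi, List.getD_eq_getElem _ _ hi⟩

theorem getD_map0 {l : List ℕ} (g : ℕ → ℕ) {i : ℕ} (h : i < l.length) :
    (l.map g).getD i 0 = g (l.getD i 0) := by
  rw [List.getD_eq_getElem _ _ h, List.getD_eq_getElem (l.map g) _ (by simpa using h),
    List.getElem_map]

/-! ### max letter -/

def mx (l : List ℕ) : ℕ := l.foldr max 1

theorem le_mx {l : List ℕ} {x : ℕ} (h : x ∈ l) : x ≤ mx l := by
  induction l with
  | nil => simp at h
  | cons a t ih =>
    rcases List.mem_cons.1 h with rfl | h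
    · exact le_max_left _ _
    · exact le_trans (ih h) (le_max_right _ _)

theorem mx_mem_or {l : List ℕ} : mx l ∈ l ∨ mx l = 1 := by
  induction l with
  | nil => exact Or.inr rfl
  | cons a t ih =>
    rcases le_or_gt (mx t) a with h | h
    · left; simp [mx, List.foldr] at *; omega
    · have : mx (a :: t) = mx t := by simp [mx, List.foldr] at *; omega
      rw [this]
      rcases ih with h' | h'
      · exact Or.inl (List.mem_cons_of_mem _ h')
      · exact Or.inr h'

theorem mx_mem {l : List ℕ} (h2 : ∀ x ∈ l, 2 ≤ x) (hne : l ≠ []) : mx l ∈ l := by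
  rcases mx_mem_or (l := l) with h | h
  · exact h
  · exfalso
    obtain ⟨a, t, rfl⟩ := List.exists_cons_of_ne_nil hne
    have := h2 a List.mem_cons_self
    have := le_mx (l := a :: t) (x := a) List.mem_cons_self
    omega

theorem one_le_mx (l : List ℕ) : 1 ≤ mx l := by
  induction l with
  | nil => simp [mx]
  | cons a t ih => simp [mx, List.foldr] at *; omega


/-! ### shifts -/

def shE (c x : ℕ) : ℕ := if x = 2 then 2 else x + c

def ush (c x : ℕ) : ℕ := if x = 2 then 2 else x - c

theorem ush_shE {c x : ℕ} (h : 2 ≤ x) : ush c (shE c x) = x := by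
  rcases eq_or_lt_of_le h with rfl | h
  · simp [shE, ush]
  · have hx : x ≠ 2 := by omega
    simp only [shE, ush, if_neg hx, if_neg (by omega : x + c ≠ 2)]
    omega

theorem shE_ush {c x : ℕ} (h : x = 2 ∨ c + 3 ≤ x) : shE c (ush c x) = x := by
  rcases h with rfl | h
  · simp [shE, ush]
  · simp only [shE, ush, if_neg (by omega : x ≠ 2), if_neg (by omega : x - c ≠ 2)]
    omega

theorem shE_inj {c x y : ℕ} (hx : 2 ≤ x) (hy : 2 ≤ y) (h : shE c x = shE c y) : x = y := by
  have := ush_shE (c := c) hx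
  have := ush_shE (c := c) hy
  rw [h] at *; omega

theorem ush_inj {c x y : ℕ} (hx : x = 2 ∨ c + 3 ≤ x) (hy : y = 2 ∨ c + 3 ≤ y)
    (h : ush c x = ush c y) : x = y := by
  have := shE_ush hx
  have := shE_ush hy
  rw [h] at *; omega

/-! ### basic facts about Good lists -/

theorem Good.head2 {l : List ℕ} (hg : Good l) (h : 0 < l.length) : l.getD 0 0 = 2 := by
  have hm : l.getD 0 0 ∈ l := getD_mem h
  have h2 := hg.1 _ hm
  by_contra hne
  obtain ⟨j, hj, -⟩ := hg.2.1 0 2 le_rfl (by omega)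
  omega

/-- every letter between 2 and the max occurs in a Good list -/
theorem Good.all_present {l : List ℕ} (hg : Good l) {t : ℕ} (h2 : 2 ≤ t) (hm : t ≤ mx l) :
    t ∈ l := by
  have hne : l ≠ [] := by
    rintro rfl; simp [mx] at hm; omega
  have hmx : mx l ∈ l := mx_mem hg.1 hne
  rcases eq_or_lt_of_le hm with rfl | hlt
  · exact hmx
  · obtain ⟨i, hi, hgi⟩ := mem_getD hmx
    obtain ⟨j, hj, hgj⟩ := hg.2.1 i t h2 (by omega)
    have : j < l.length := lt_trans hj hi
    rw [← hgj]; exact getD_mem this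

/-- letters are bounded by position + 2 -/
theorem LP1.le_pos {l : List ℕ} (h1 : LP1 l) : ∀ i, l.getD i 0 ≤ i + 2 := by
  intro i
  induction i using Nat.strong_induction_on with
  | _ i ih =>
    by_contra hc
    push_neg at hc
    obtain ⟨j, hj, hgj⟩ := h1 i (i + 2) (by omega) hc
    have := ih j hj
    omega

/-! ### composition -/

section Comp

variable {A B : List ℕ}

theorem comp_good (hA : Good A) (hB : Good B) :
    Good (2 :: (A.map (· + 1) ++ B.map (shE (mx A - 1)))) := by
  set m := mx A with hm
  set c := m - 1 with hc
  set l : List ℕ := 2 :: (A.map (· + 1) ++ B.map (shE c)) with hl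
  have hm1 : 1 ≤ m := one_le_mx A
  have hAle : ∀ x ∈ A, x ≤ m := fun x hx => le_mx hx
  have hA2 := hA.1
  have hB2 := hB.1
  have hlen : l.length = A.length + B.length + 1 := by simp [hl]
  have g0 : l.getD 0 0 = 2 := rfl
  have gIn : ∀ i : ℕ, 1 ≤ i → i ≤ A.length → l.getD i 0 = A.getD (i - 1) 0 + 1 := by
    intro i h1 h2
    have hi : i = (i - 1) + 1 := by omega
    rw [hl, hi, List.getD_cons_succ,
      List.getD_append _ _ _ _ (by simp; omega),
      getD_map0 _ (by omega)]
    simp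
  have gOut : ∀ i : ℕ, A.length < i → i < l.length →
      l.getD i 0 = shE c (B.getD (i - A.length - 1) 0) := by
    intro i h1 h2
    have hi : i = (i - 1) + 1 := by omega
    rw [hl, hi, List.getD_cons_succ,
      List.getD_append_right _ _ _ _ (by simp; omega)]
    rw [List.length_map]
    have : i - 1 - A.length = i - A.length - 1 := by omega
    rw [this, getD_map0 _ (by rw [hlen] at h2; omega)]
    congr 2
    omega
  have vIn : ∀ i : ℕ, 1 ≤ i → i ≤ A.length → 3 ≤ l.getD i 0 ∧ l.getD i 0 ≤ m + 1 := by
    intro i h1 h2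
    rw [gIn i h1 h2]
    have hmem : A.getD (i - 1) 0 ∈ A := getD_mem (by omega)
    have := hA2 _ hmem
    have := hAle _ hmem
    omega
  have vOut : ∀ i : ℕ, A.length < i → i < l.length →
      l.getD i 0 = 2 ∨ m + 2 ≤ l.getD i 0 := by
    intro i h1 h2
    rw [gOut i h1 h2]
    have hmem : B.getD (i - A.length - 1) 0 ∈ B := getD_mem (by rw [hlen] at h2; omega)
    have h2b := hB2 _ hmem
    by_cases he : B.getD (i - A.length - 1) 0 = 2
    · left; rw [he]; rfl
    · right; rw [shE, if_neg he]; omega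
  have outB : ∀ i : ℕ, A.length < i → i < l.length →
      (i - A.length - 1 < B.length ∧ B.getD (i - A.length - 1) 0 ∈ B) := by
    intro i h1 h2
    rw [hlen] at h2
    exact ⟨by omega, getD_mem (by omega)⟩
  refine ⟨?_, ?_, ?_⟩
  · -- letters ≥ 2
    intro x hx
    rw [hl] at hx
    rcases List.mem_cons.1 hx with rfl | hx
    · omega
    rcases List.mem_append.1 hx with hx | hx
    · obtain ⟨a, ha, rfl⟩ := List.mem_map.1 hx
      have := hA2 a ha; omega
    · obtain ⟨b, hb, rfl⟩ := List.mem_map.1 hx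
      have := hB2 b hb
      rw [shE]; split <;> omega
  · -- LP1
    intro i t ht hlt
    by_cases hi : i < l.length
    swap
    · rw [List.getD_eq_default _ _ (by omega)] at hlt; omega
    rcases Nat.eq_zero_or_pos i with rfl | hi0
    · rw [g0] at hlt; omega
    by_cases hiA : i ≤ A.length
    · -- inner position
      rcases eq_or_lt_of_le ht with rfl | ht3
      · exact ⟨0, by omega, g0⟩
      rw [gIn i hi0 hiA] at hlt
      obtain ⟨j, hj, hgj⟩ := hA.2.1 (i - 1) (t - 1) (by omega) (by omega)
      refine ⟨j + 1, by omega, ?_⟩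
      rw [gIn (j + 1) (by omega) (by omega)]
      simp only [Nat.add_sub_cancel]
      omega
    · -- outer position
      push_neg at hiA
      rw [gOut i hiA hi] at hlt
      obtain ⟨hqlen, hqmem⟩ := outB i hiA hi
      by_cases he : B.getD (i - A.length - 1) 0 = 2
      · rw [he] at hlt; simp [shE] at hlt; omega
      rw [shE, if_neg he] at hlt
      have hbq2 := hB2 _ hqmem
      rcases eq_or_lt_of_le ht with rfl | ht3
      · exact ⟨0, by omega, g0⟩
      by_cases htm : t ≤ m + 1
      · -- t - 1 present in A
        have hmA : t - 1 ∈ A := hA.all_present (by omega) (by omega)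
        obtain ⟨j, hj, hgj⟩ := mem_getD hmA
        refine ⟨j + 1, by omega, ?_⟩
        rw [gIn (j + 1) (by omega) (by omega)]
        simp only [Nat.add_sub_cancel]
        omega
      · -- t - c present in B before
        push_neg at htm
        obtain ⟨j, hj, hgj⟩ := hB.2.1 (i - A.length - 1) (t - c) (by omega) (by omega)
        refine ⟨A.length + 1 + j, by omega, ?_⟩
        rw [gOut (A.length + 1 + j) (by omega) (by rw [hlen]; omega)]
        have : A.length + 1 + j - A.length - 1 = j := by omega
        rw [this, hgj, shE, if_neg (by omega)]
        omega
  · -- LP2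
    intro i1 i2 i3 i4 h12 h23 h34 h4 e13 e24
    have hi4' : i4 < l.length := h4
    rcases Nat.eq_zero_or_pos i1 with rfl | h1pos
    · -- i1 = 0, v1 = 2
      rw [g0] at e13 ⊢
      -- i3 must be outer
      have hi3 : i3 < l.length := by omega
      have hi3out : A.length < i3 := by
        by_contra hle
        push_neg at hle
        have := vIn i3 (by omega) hle
        omega
      obtain ⟨hq3len, hq3mem⟩ := outB i3 hi3out hi3
      have hq3 : B.getD (i3 - A.length - 1) 0 = 2 := by
        rw [gOut i3 hi3out hi3] at e13
        by_contra hne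
        rw [shE, if_neg hne] at e13
        have := hB2 _ hq3mem
        omega
      have hBne : 0 < B.length := by omega
      have hB0 : B.getD 0 0 = 2 := hB.head2 hBne
      by_cases hi2A : i2 ≤ A.length
      · -- i2 inner: contradiction via i4 outer
        have hv2 := vIn i2 (by omega) hi2A
        have hv4 := vOut i4 (by omega) hi4'
        omega
      · push_neg at hi2A
        obtain ⟨hq2len, hq2mem⟩ := outB i2 hi2A (by omega)
        obtain ⟨hq4len, hq4mem⟩ := outB i4 (by omega) hi4'
        rw [gOut i2 hi2A (by omega)] at e24 ⊢
        rw [gOut i4 (by omega) hi4'] at e24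
        have e24' : B.getD (i2 - A.length - 1) 0 = B.getD (i4 - A.length - 1) 0 :=
          shE_inj (hB2 _ hq2mem) (hB2 _ hq4mem) e24
        by_cases hq2 : B.getD (i2 - A.length - 1) 0 = 2
        · rw [hq2]; rfl
        · exfalso
          have h02 : 0 < i2 - A.length - 1 := by
            rcases Nat.eq_zero_or_pos (i2 - A.length - 1) with hz | h
            · exact (hq2 (by rw [hz]; exact hB0)).elim
            · exact h
          have := hB.2.2 0 (i2 - A.length - 1) (i3 - A.length - 1) (i4 - A.length - 1)
            h02 (by omega) (by omega) hq4len (by rw [hB0, hq3]) e24'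
          rw [hB0] at this
          exact hq2 this.symm
    · by_cases hi1A : i1 ≤ A.length
      · -- i1 inner ⇒ all inner
        have hv1 := vIn i1 h1pos hi1A
        have hi3in : i3 ≤ A.length := by
          by_contra hgt
          push_neg at hgt
          have := vOut i3 hgt (by omega)
          omega
        have hi2in : i2 ≤ A.length := by omega
        have hv2 := vIn i2 (by omega) hi2in
        have hi4in : i4 ≤ A.length := by
          by_contra hgt
          push_neg at hgt
          have := vOut i4 hgt hi4'
          omega
        rw [gIn i1 h1pos hi1A, gIn i3 (by omega) hi3in] at e13
        rw [gIn i2 (by omega) hi2in, gIn i4 (by omega) hi4in] at e24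
        have := hA.2.2 (i1 - 1) (i2 - 1) (i3 - 1) (i4 - 1) (by omega) (by omega) (by omega)
          (by omega) (by omega) (by omega)
        rw [gIn i1 h1pos hi1A, gIn i2 (by omega) hi2in]
        omega
      · -- i1 outer ⇒ all outer
        push_neg at hi1A
        obtain ⟨hq1len, hq1mem⟩ := outB i1 hi1A (by omega)
        obtain ⟨hq2len, hq2mem⟩ := outB i2 (by omega) (by omega)
        obtain ⟨hq3len, hq3mem⟩ := outB i3 (by omega) (by omega)
        obtain ⟨hq4len, hq4mem⟩ := outB i4 (by omega) hi4'
        rw [gOut i1 hi1A (by omega), gOut i3 (by omega) (by omega)] at e13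
        rw [gOut i2 (by omega) (by omega), gOut i4 (by omega) hi4'] at e24
        have e13' := shE_inj (hB2 _ hq1mem) (hB2 _ hq3mem) e13
        have e24' := shE_inj (hB2 _ hq2mem) (hB2 _ hq4mem) e24
        have := hB.2.2 (i1 - A.length - 1) (i2 - A.length - 1) (i3 - A.length - 1)
          (i4 - A.length - 1) (by omega) (by omega) (by omega) hq4len e13' e24'
        rw [gOut i1 hi1A (by omega), gOut i2 (by omega) (by omega), this]

end Comp

/-! ### the tree encoding -/

def f : BinaryTree Unit → List ℕ
  | BinaryTree.nil => []
  | BinaryTree.node _ a b => 2 :: ((f a).map (· + 1) ++ (f b).map (shE (mx (f a) - 1)))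

theorem good_nil : Good ([] : List ℕ) := by
  refine ⟨by simp, ?_, ?_⟩
  · intro i t ht hlt; simp [List.getD] at hlt
  · intro i1 i2 i3 i4 _ _ _ h4; simp at h4

theorem f_good : ∀ t : BinaryTree Unit, Good (f t)
  | BinaryTree.nil => good_nil
  | BinaryTree.node _ a b => comp_good (f_good a) (f_good b)

theorem f_len : ∀ t : BinaryTree Unit, (f t).length = t.numNodes
  | BinaryTree.nil => rfl
  | BinaryTree.node _ a b => by
    simp [f, BinaryTree.numNodes, f_len a, f_len b]

theorem map_map_id {g h : ℕ → ℕ} {l : List ℕ} (H : ∀ x ∈ l, h (g x) = x) :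
    (l.map g).map h = l := by
  rw [List.map_map]
  conv_rhs => rw [← List.map_id l]
  exact List.map_congr_left H

theorem split_unique : ∀ (X : List ℕ) {Y X' Y' : List ℕ},
    (∀ x ∈ X, x ≠ 2) → (∀ x ∈ X', x ≠ 2) →
    (Y = [] ∨ Y.getD 0 0 = 2) → (Y' = [] ∨ Y'.getD 0 0 = 2) →
    X ++ Y = X' ++ Y' → X = X' ∧ Y = Y'
  | [], Y, [], Y', _, _, _, _, h => ⟨rfl, h⟩
  | [], Y, a :: t, Y', _, hX', hY, _, h => by
    exfalso
    rcases hY with rfl | hY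
    · simp at h
    · simp only [List.nil_append] at h
      rw [h] at hY
      exact hX' a (by simp) (by simpa using hY)
  | x :: xs, Y, [], Y', hX, _, _, hY', h => by
    exfalso
    rcases hY' with rfl | hY'
    · simp at h
    · simp only [List.nil_append] at h
      rw [← h] at hY'
      exact hX x (by simp) (by simpa using hY')
  | x :: xs, Y, a :: t, Y', hX, hX', hY, hY', h => by
    simp only [List.cons_append, List.cons.injEq] at h
    obtain ⟨rfl, h2⟩ := h
    obtain ⟨h3, h4⟩ := split_unique xs (fun y hy => hX y (by simp [hy]))
      (fun y hy => hX' y (by simp [hy])) hY hY' h2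
    exact ⟨by rw [h3], h4⟩

theorem f_ne_two : ∀ (t : BinaryTree Unit), ∀ x ∈ (f t).map (· + 1), x ≠ 2 := by
  intro t x hx
  obtain ⟨y, hy, rfl⟩ := List.mem_map.1 hx
  have := (f_good t).1 y hy
  omega

theorem f_head_two (t : BinaryTree Unit) (c : ℕ) :
    (f t).map (shE c) = [] ∨ ((f t).map (shE c)).getD 0 0 = 2 := by
  rcases List.eq_nil_or_concat (f t) with h | _
  · left; rw [h]; rfl
  · by_cases hne : f t = []
    · left; rw [hne]; rfl
    · right
      have hpos : 0 < (f t).length := List.length_pos_iff.2 hne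
      rw [getD_map0 _ hpos, (f_good t).head2 hpos]
      rfl

theorem f_inj : ∀ t1 t2 : BinaryTree Unit, f t1 = f t2 → t1 = t2
  | BinaryTree.nil, BinaryTree.nil, _ => rfl
  | BinaryTree.nil, BinaryTree.node _ a b, h => by simp [f] at h
  | BinaryTree.node _ a b, BinaryTree.nil, h => by simp [f] at h
  | BinaryTree.node u a b, BinaryTree.node u' a' b', h => by
    simp only [f, List.cons.injEq, true_and] at h
    obtain ⟨hX, hY⟩ := split_unique _ (f_ne_two a) (f_ne_two a')
      (f_head_two b _) (f_head_two b' _) h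
    have ha : f a = f a' := by
      have := congrArg (List.map (· - 1)) hX
      rwa [map_map_id (fun x _ => by omega), map_map_id (fun x _ => by omega)] at this
    have haa : a = a' := f_inj a a' ha
    subst haa
    have hb : f b = f b' := by
      have := congrArg (List.map (ush (mx (f a) - 1))) hY
      rwa [map_map_id (fun x hx => ush_shE ((f_good b).1 x hx)),
        map_map_id (fun x hx => ush_shE ((f_good b').1 x hx))] at this
    have : b = b' := f_inj b b' hb
    subst this
    rfl

/-! ### surjectivity -/

theorem mx_map_pred {X : List ℕ} (h3 : ∀ x ∈ X, 3 ≤ x) (hne : X ≠ []) :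
    mx (X.map (· - 1)) = mx X - 1 := by
  have h2' : ∀ x ∈ X.map (· - 1), 2 ≤ x := by
    intro x hx; obtain ⟨y, hy, rfl⟩ := List.mem_map.1 hx; have := h3 y hy; omega
  have hne' : X.map (· - 1) ≠ [] := by simpa using hne
  apply le_antisymm
  · obtain ⟨y, hy, heq⟩ := List.mem_map.1 (mx_mem h2' hne')
    have := le_mx hy
    omega
  · exact le_mx (List.mem_map.2 ⟨mx X, mx_mem (fun x hx => by have := h3 x hx; omega) hne, rfl⟩)

theorem dropWhile_head2 : ∀ r : List ℕ,
    r.dropWhile (fun y => y != 2) = [] ∨ (r.dropWhile (fun y => y != 2)).getD 0 0 = 2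
  | [] => Or.inl rfl
  | a :: t => by
    rw [List.dropWhile_cons]
    by_cases ha : a = 2
    · right; simp [ha]
    · simpa [ha] using dropWhile_head2 t

theorem f_surj : ∀ (n : ℕ) (l : List ℕ), l.length = n → Good l → ∃ t, f t = l := by
  intro n
  induction n using Nat.strong_induction_on with
  | _ n ih =>
  intro l hlen hg
  cases l with
  | nil => exact ⟨BinaryTree.nil, rfl⟩
  | cons x r =>
  have hx : x = 2 := by simpa using hg.head2 (by simp)
  subst hx
  set X := r.takeWhile (fun y => y != 2) with hXdef
  set Y := r.dropWhile (fun y => y != 2) with hYdef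
  have hr : X ++ Y = r := List.takeWhile_append_dropWhile
  have hXne2 : ∀ x ∈ X, x ≠ 2 := fun x hx => by
    have := List.mem_takeWhile_imp hx; simpa using this
  have hYhd : Y = [] ∨ Y.getD 0 0 = 2 := dropWhile_head2 r
  have hl2 : ∀ x ∈ (2 :: r : List ℕ), 2 ≤ x := hg.1
  have hX3 : ∀ x ∈ X, 3 ≤ x := by
    intro x hx
    have hxr : x ∈ r := by rw [← hr]; exact List.mem_append_left _ hx
    have := hl2 x (List.mem_cons_of_mem _ hxr)
    have := hXne2 x hx
    omega
  have hY2 : ∀ y ∈ Y, 2 ≤ y := by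
    intro y hy
    have hyr : y ∈ r := by rw [← hr]; exact List.mem_append_right _ hy
    exact hl2 y (List.mem_cons_of_mem _ hyr)
  set na := X.length with hna
  have hrlen : r.length = na + Y.length := by rw [← hr]; simp [hna]
  have hlen' : n = na + Y.length + 1 := by rw [← hlen]; simp [hrlen]
  have gpos : ∀ i : ℕ, 1 ≤ i → i ≤ na → (2 :: r).getD i 0 = X.getD (i - 1) 0 := by
    intro i h1 h2
    have hi : i = (i - 1) + 1 := by omega
    rw [hi, List.getD_cons_succ, ← hr, List.getD_append _ _ _ _ (by omega)]
    simp
  have gpos2 : ∀ i : ℕ, na < i → (2 :: r).getD i 0 = Y.getD (i - na - 1) 0 := by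
    intro i h1
    have hi : i = (i - 1) + 1 := by omega
    rw [hi, List.getD_cons_succ, ← hr, List.getD_append_right _ _ _ _ (by omega)]
    congr 1
    omega
  have g0 : (2 :: r).getD 0 0 = 2 := rfl
  set A : List ℕ := X.map (· - 1) with hAdef
  have hAlen : A.length = na := by simp [hAdef, hna]
  have hA2 : ∀ x ∈ A, 2 ≤ x := by
    intro x hx; obtain ⟨y, hy, rfl⟩ := List.mem_map.1 hx; have := hX3 y hy; omega
  have goodA : Good A := by
    refine ⟨hA2, ?_, ?_⟩
    · intro i t ht hlt
      by_cases hi : i < na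
      swap
      · rw [List.getD_eq_default _ _ (by rw [hAlen]; omega)] at hlt; omega
      have hXi : X.getD i 0 ∈ X := getD_mem hi
      have h3 := hX3 _ hXi
      rw [hAdef, getD_map0 _ hi] at hlt
      have hli : (2 :: r).getD (i + 1) 0 = X.getD i 0 := by
        rw [gpos (i + 1) (by omega) (by omega), Nat.add_sub_cancel]
      obtain ⟨j, hj, hgj⟩ := hg.2.1 (i + 1) (t + 1) (by omega) (by rw [hli]; omega)
      have hj0 : j ≠ 0 := by
        intro h0; rw [h0, g0] at hgj; omega
      have hXj : X.getD (j - 1) 0 = t + 1 := by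
        rw [← gpos j (by omega) (by omega)]; exact hgj
      refine ⟨j - 1, by omega, ?_⟩
      rw [hAdef, getD_map0 _ (by omega), hXj]
      omega
    · intro i1 i2 i3 i4 h12 h23 h34 h4 e13 e24
      rw [hAdef, List.length_map] at h4
      have m1 := hX3 _ (getD_mem (l := X) (i := i1) (by omega))
      have m2 := hX3 _ (getD_mem (l := X) (i := i2) (by omega))
      have m3 := hX3 _ (getD_mem (l := X) (i := i3) (by omega))
      have m4 := hX3 _ (getD_mem (l := X) (i := i4) (by omega))
      rw [hAdef, getD_map0 _ (by omega), getD_map0 _ (by omega)] at e13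
      rw [hAdef, getD_map0 _ (by omega), getD_map0 _ (by omega)] at e24
      have hLe : ∀ q : ℕ, q < na → (2 :: r).getD (q + 1) 0 = X.getD q 0 := by
        intro q hq; rw [gpos (q + 1) (by omega) (by omega), Nat.add_sub_cancel]
      have key := hg.2.2 (i1 + 1) (i2 + 1) (i3 + 1) (i4 + 1) (by omega) (by omega) (by omega)
        (by simp [hrlen]; omega)
        (by rw [hLe _ (by omega), hLe _ (by omega)]; omega)
        (by rw [hLe _ (by omega), hLe _ (by omega)]; omega)
      rw [hLe _ (by omega), hLe _ (by omega)] at key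
      rw [hAdef, getD_map0 _ (by omega), getD_map0 _ (by omega), key]
  set c := mx A - 1 with hc
  have hcY : ∀ y ∈ Y, y = 2 ∨ c + 3 ≤ y := by
    intro y hy
    by_cases hy2 : y = 2
    · exact Or.inl hy2
    right
    have hy3 : 3 ≤ y := by have := hY2 y hy; omega
    obtain ⟨q, hq, hgq⟩ := mem_getD hy
    have hYne : Y ≠ [] := by intro h; rw [h] at hq; simp at hq
    have hY0 : Y.getD 0 0 = 2 := hYhd.resolve_left hYne
    have hq0 : q ≠ 0 := by intro h; rw [h, hY0] at hgq; omega
    by_cases hXe : X = []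
    · have hc0 : c = 0 := by rw [hc, hAdef, hXe]; simp [mx]
      omega
    · have hMmem : mx X ∈ X := mx_mem (fun x hx => by have := hX3 x hx; omega) hXe
      have hM3 : 3 ≤ mx X := hX3 _ hMmem
      have hcM : c = mx X - 2 := by rw [hc, hAdef, mx_map_pred hX3 hXe]; omega
      by_contra hlt
      push_neg at hlt
      have hyle : y ≤ mx X := by omega
      have hyX : y ∈ X := by
        rcases eq_or_lt_of_le hyle with heq | hlt2
        · rw [heq]; exact hMmem
        · obtain ⟨iM, hiM, hgM⟩ := mem_getD hMmem
          obtain ⟨j, hj, hgj⟩ := hg.2.1 (iM + 1) y (by omega)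
            (by rw [gpos (iM + 1) (by omega) (by omega), Nat.add_sub_cancel, hgM]; exact hlt2)
          have hj0 : j ≠ 0 := by intro h0; rw [h0, g0] at hgj; omega
          have : X.getD (j - 1) 0 = y := by
            rw [← gpos j (by omega) (by omega)]; exact hgj
          rw [← this]
          exact getD_mem (by omega)
      obtain ⟨qx, hqx, hgx⟩ := mem_getD hyX
      have key := hg.2.2 0 (qx + 1) (na + 1) (na + 1 + q) (by omega) (by omega) (by omega)
        (by simp [hrlen]; omega)
        (by rw [g0, gpos2 (na + 1) (by omega)]
            simp only [show na + 1 - na - 1 = 0 from by omega, hY0])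
        (by rw [gpos (qx + 1) (by omega) (by omega), gpos2 (na + 1 + q) (by omega)]
            simp only [Nat.add_sub_cancel, show na + 1 + q - na - 1 = q from by omega, hgx, hgq])
      rw [g0, gpos (qx + 1) (by omega) (by omega)] at key
      simp only [Nat.add_sub_cancel, hgx] at key
      omega
  set B : List ℕ := Y.map (ush c) with hBdef
  have hBlen : B.length = Y.length := by simp [hBdef]
  have goodB : Good B := by
    refine ⟨?_, ?_, ?_⟩
    · intro x hx
      obtain ⟨y, hy, rfl⟩ := List.mem_map.1 hx
      rcases hcY y hy with rfl | h
      · simp [ush]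
      · rw [ush, if_neg (by omega)]; omega
    · intro q t ht hlt
      by_cases hq : q < Y.length
      swap
      · rw [List.getD_eq_default _ _ (by rw [hBlen]; omega)] at hlt; omega
      have hYq : Y.getD q 0 ∈ Y := getD_mem hq
      rw [hBdef, getD_map0 _ hq] at hlt
      by_cases hq2 : Y.getD q 0 = 2
      · rw [hq2] at hlt; simp [ush] at hlt; omega
      have hbig : c + 3 ≤ Y.getD q 0 := (hcY _ hYq).resolve_left hq2
      rw [ush, if_neg hq2] at hlt
      have hYne : Y ≠ [] := by intro h; rw [h] at hq; simp at hq
      have hY0 : Y.getD 0 0 = 2 := hYhd.resolve_left hYne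
      have hq0 : q ≠ 0 := by intro h; rw [h] at hq2; exact hq2 hY0
      rcases eq_or_lt_of_le ht with rfl | ht3
      · refine ⟨0, by omega, ?_⟩
        rw [hBdef, getD_map0 _ (by omega), hY0]; rfl
      obtain ⟨j, hj, hgj⟩ := hg.2.1 (na + 1 + q) (t + c) (by omega)
        (by rw [gpos2 _ (by omega)]
            simp only [show na + 1 + q - na - 1 = q from by omega]
            omega)
      have hj0 : j ≠ 0 := by intro h0; rw [h0, g0] at hgj; omega
      have hjna : na < j := by
        by_contra hle
        push_neg at hle
        have hXj : X.getD (j - 1) 0 = t + c := by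
          rw [← gpos j (by omega) hle]; exact hgj
        have hmem : X.getD (j - 1) 0 ∈ X := getD_mem (by omega)
        have hle2 := le_mx hmem
        by_cases hXe : X = []
        · rw [hXe] at hmem; simp at hmem
        · have hcM : c = mx X - 2 := by rw [hc, hAdef, mx_map_pred hX3 hXe]; omega
          have hM3 : 3 ≤ mx X := hX3 _ (mx_mem (fun x hx => by have := hX3 x hx; omega) hXe)
          omega
      have hYj : Y.getD (j - na - 1) 0 = t + c := by
        rw [← gpos2 j (by omega)]; exact hgj
      refine ⟨j - na - 1, by omega, ?_⟩
      rw [hBdef, getD_map0 _ (by omega), hYj, ush, if_neg (by omega)]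
      omega
    · intro q1 q2 q3 q4 h12 h23 h34 h4 e13 e24
      rw [hBlen] at h4
      have m1 := hcY _ (getD_mem (l := Y) (i := q1) (by omega))
      have m2 := hcY _ (getD_mem (l := Y) (i := q2) (by omega))
      have m3 := hcY _ (getD_mem (l := Y) (i := q3) (by omega))
      have m4 := hcY _ (getD_mem (l := Y) (i := q4) (by omega))
      rw [hBdef, getD_map0 _ (by omega), getD_map0 _ (by omega)] at e13
      rw [hBdef, getD_map0 _ (by omega), getD_map0 _ (by omega)] at e24
      have e13' := ush_inj m1 m3 e13
      have e24' := ush_inj m2 m4 e24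
      have hLe : ∀ q : ℕ, q < Y.length → (2 :: r).getD (na + 1 + q) 0 = Y.getD q 0 := by
        intro q hq
        rw [gpos2 _ (by omega)]
        congr 1
        omega
      have key := hg.2.2 (na + 1 + q1) (na + 1 + q2) (na + 1 + q3) (na + 1 + q4)
        (by omega) (by omega) (by omega) (by simp [hrlen]; omega)
        (by rw [hLe _ (by omega), hLe _ (by omega)]; exact e13')
        (by rw [hLe _ (by omega), hLe _ (by omega)]; exact e24')
      rw [hLe _ (by omega), hLe _ (by omega)] at key
      rw [hBdef, getD_map0 _ (by omega), getD_map0 _ (by omega), key]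
  obtain ⟨ta, hta⟩ := ih A.length (by omega) A rfl goodA
  obtain ⟨tb, htb⟩ := ih B.length (by rw [hBlen]; omega) B rfl goodB
  refine ⟨BinaryTree.node () ta tb, ?_⟩
  show 2 :: ((f ta).map (· + 1) ++ (f tb).map (shE (mx (f ta) - 1))) = 2 :: r
  rw [hta, htb, ← hc, ← hr]
  congr 1
  congr 1
  · exact map_map_id (fun x hx => by have := hX3 x hx; omega)
  · exact map_map_id (fun y hy => shE_ush (hcY y hy))

/-! ### counting Good lists -/

theorem card_good (n : ℕ) :
    Nat.card {l : List ℕ // l.length = n ∧ Good l} = catalan n := by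
  have e : {t : BinaryTree Unit // t ∈ BinaryTree.treesOfNumNodesEq n} ≃
      {l : List ℕ // l.length = n ∧ Good l} := by
    refine Equiv.ofBijective
      (fun t => ⟨f t.1, by rw [f_len]; exact BinaryTree.mem_treesOfNumNodesEq.1 t.2, f_good t.1⟩)
      ⟨?_, ?_⟩
    · intro t1 t2 h
      exact Subtype.ext (f_inj _ _ (congrArg Subtype.val h))
    · rintro ⟨l, hlen, hgood⟩
      obtain ⟨t, ht⟩ := f_surj l.length l rfl hgood
      refine ⟨⟨t, BinaryTree.mem_treesOfNumNodesEq.2 ?_⟩, ?_⟩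
      · rw [← f_len t, ht, hlen]
      · exact Subtype.ext ht
  rw [← Nat.card_congr e, Nat.card_eq_fintype_card, Fintype.card_coe]
  exact BinaryTree.treesOfNumNodesEq_card_eq_catalan n

/-! ### words with ones: the shift bijection -/

theorem goodW_cons {l : List ℕ} (h : GoodW l) : Good (2 :: l.map (· + 1)) := by
  obtain ⟨h1, hp1, hp2, hp3⟩ := h
  have g0 : (2 :: l.map (· + 1)).getD 0 0 = 2 := rfl
  have gS : ∀ i : ℕ, i < l.length → (2 :: l.map (· + 1)).getD (i + 1) 0 = l.getD i 0 + 1 := by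
    intro i hi
    rw [List.getD_cons_succ, getD_map0 _ hi]
  refine ⟨?_, ?_, ?_⟩
  · intro x hx
    rcases List.mem_cons.1 hx with rfl | hx
    · omega
    · obtain ⟨y, hy, rfl⟩ := List.mem_map.1 hx
      have := h1 y hy; omega
  · intro i t ht hlt
    cases i with
    | zero => rw [g0] at hlt; omega
    | succ j =>
      by_cases hj : j < l.length
      swap
      · rw [List.getD_cons_succ, List.getD_eq_default _ _ (by simp; omega)] at hlt; omega
      rw [gS j hj] at hlt
      rcases eq_or_lt_of_le ht with rfl | ht3
      · exact ⟨0, by omega, g0⟩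
      obtain ⟨j', hj', hgj'⟩ := hp1 j (t - 1) (by omega) (by omega)
      refine ⟨j' + 1, by omega, ?_⟩
      rw [gS j' (by omega), hgj']
      omega
  · intro i1 i2 i3 i4 h12 h23 h34 h4 e13 e24
    simp only [List.length_cons, List.length_map] at h4
    cases i1 with
    | zero =>
      rw [g0] at e13 ⊢
      obtain ⟨j2, rfl⟩ : ∃ j2, i2 = j2 + 1 := ⟨i2 - 1, by omega⟩
      obtain ⟨j3, rfl⟩ : ∃ j3, i3 = j3 + 1 := ⟨i3 - 1, by omega⟩
      obtain ⟨j4, rfl⟩ : ∃ j4, i4 = j4 + 1 := ⟨i4 - 1, by omega⟩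
      rw [gS j3 (by omega)] at e13
      rw [gS j2 (by omega), gS j4 (by omega)] at e24
      rw [gS j2 (by omega)]
      have := hp3 j2 j3 j4 (by omega) (by omega) (by omega) (by omega) (by omega)
      omega
    | succ j1 =>
      obtain ⟨j2, rfl⟩ : ∃ j2, i2 = j2 + 1 := ⟨i2 - 1, by omega⟩
      obtain ⟨j3, rfl⟩ : ∃ j3, i3 = j3 + 1 := ⟨i3 - 1, by omega⟩
      obtain ⟨j4, rfl⟩ : ∃ j4, i4 = j4 + 1 := ⟨i4 - 1, by omega⟩
      rw [gS j1 (by omega), gS j3 (by omega)] at e13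
      rw [gS j2 (by omega), gS j4 (by omega)] at e24
      rw [gS j1 (by omega), gS j2 (by omega)]
      have := hp2 j1 j2 j3 j4 (by omega) (by omega) (by omega) (by omega) (by omega) (by omega)
      omega

theorem cons_goodW {tl : List ℕ} (h : Good (2 :: tl)) : GoodW (tl.map (· - 1)) := by
  obtain ⟨h1, hp1, hp2⟩ := h
  have h2 : ∀ x ∈ tl, 2 ≤ x := fun x hx => h1 x (List.mem_cons_of_mem _ hx)
  have gS : ∀ i : ℕ, (2 :: tl).getD (i + 1) 0 = tl.getD i 0 := fun i => List.getD_cons_succ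
  have g0 : (2 :: tl).getD 0 0 = 2 := rfl
  have gM : ∀ i : ℕ, i < tl.length → (tl.map (· - 1)).getD i 0 = tl.getD i 0 - 1 :=
    fun i hi => getD_map0 _ hi
  have hmem : ∀ i : ℕ, i < tl.length → 2 ≤ tl.getD i 0 := fun i hi => h2 _ (getD_mem hi)
  refine ⟨?_, ?_, ?_, ?_⟩
  · intro x hx
    obtain ⟨y, hy, rfl⟩ := List.mem_map.1 hx
    have := h2 y hy; omega
  · intro i t ht hlt
    by_cases hi : i < tl.length
    swap
    · rw [List.getD_eq_default _ _ (by simp; omega)] at hlt; omega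
    rw [gM i hi] at hlt
    have hv := hmem i hi
    obtain ⟨j, hj, hgj⟩ := hp1 (i + 1) (t + 1) (by omega) (by rw [gS]; omega)
    have hj0 : j ≠ 0 := by intro h0; rw [h0, g0] at hgj; omega
    have : tl.getD (j - 1) 0 = t + 1 := by
      rw [← gS (j - 1), show j - 1 + 1 = j from by omega]; exact hgj
    refine ⟨j - 1, by omega, ?_⟩
    rw [gM (j - 1) (by omega), this]
    omega
  · intro i1 i2 i3 i4 h12 h23 h34 h4 e13 e24
    rw [List.length_map] at h4
    rw [gM i1 (by omega), gM i3 (by omega)] at e13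
    rw [gM i2 (by omega), gM i4 (by omega)] at e24
    have q1 := hmem i1 (by omega)
    have q2 := hmem i2 (by omega)
    have q3 := hmem i3 (by omega)
    have q4 := hmem i4 (by omega)
    have key := hp2 (i1 + 1) (i2 + 1) (i3 + 1) (i4 + 1) (by omega) (by omega) (by omega)
      (by simp; omega) (by rw [gS, gS]; omega) (by rw [gS, gS]; omega)
    rw [gS, gS] at key
    rw [gM i1 (by omega), gM i2 (by omega)]
    omega
  · intro i1 i2 i3 h12 h23 h3 e13 e2
    rw [List.length_map] at h3
    rw [gM i1 (by omega), gM i3 (by omega)] at e13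
    rw [gM i2 (by omega)] at e2
    have q1 := hmem i1 (by omega)
    have q2 := hmem i2 (by omega)
    have q3 := hmem i3 (by omega)
    have key := hp2 0 (i1 + 1) (i2 + 1) (i3 + 1) (by omega) (by omega) (by omega)
      (by simp; omega) (by rw [g0, gS]; omega) (by rw [gS, gS]; omega)
    rw [g0, gS] at key
    rw [gM i1 (by omega)]
    omega

theorem card_goodW (k : ℕ) :
    Nat.card {l : List ℕ // l.length = k ∧ GoodW l} = catalan (k + 1) := by
  rw [← card_good (k + 1)]
  apply Nat.card_congr
  refine Equiv.ofBijective
    (fun a => ⟨2 :: a.1.map (· + 1), by simp [a.2.1], goodW_cons a.2.2⟩) ⟨?_, ?_⟩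
  · rintro ⟨l1, h1⟩ ⟨l2, h2⟩ h
    apply Subtype.ext
    have := congrArg Subtype.val h
    simp only [List.cons.injEq, true_and] at this
    have := congrArg (List.map (· - 1)) this
    rwa [map_map_id (fun x _ => by omega), map_map_id (fun x _ => by omega)] at this
  · rintro ⟨m, hlen, hgood⟩
    cases m with
    | nil => simp at hlen
    | cons x tl =>
      have hx : x = 2 := by simpa using hgood.head2 (by simp)
      subst hx
      have htl : tl.length = k := by simpa using hlen
      refine ⟨⟨tl.map (· - 1), by simpa using htl, cons_goodW hgood⟩, ?_⟩
      apply Subtype.ext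
      simp only
      rw [map_map_id (fun y hy => by
        have := hgood.1 y (List.mem_cons_of_mem _ hy); omega)]

/-! ### finiteness and the split -/

theorem list_ext {l1 l2 : List ℕ} (h : l1.length = l2.length)
    (hh : ∀ i, i < l1.length → l1.getD i 0 = l2.getD i 0) : l1 = l2 := by
  apply List.ext_getElem h
  intro i h1 h2
  have := hh i h1
  rwa [List.getD_eq_getElem _ _ h1, List.getD_eq_getElem _ _ h2] at this

instance fin_goodW (k : ℕ) : Finite {l : List ℕ // l.length = k ∧ GoodW l} := by
  apply Finite.of_injective (β := Fin k → Fin (k + 2))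
    (fun a i => ⟨a.1.getD i.1 0, by have := a.2.2.2.1.le_pos i.1; have := i.isLt; omega⟩)
  intro a b h
  apply Subtype.ext
  apply list_ext (by rw [a.2.1, b.2.1])
  intro i hi
  have hik : i < k := by rw [← a.2.1]; exact hi
  have := congrFun h ⟨i, hik⟩
  exact congrArg Fin.val this

theorem goodW_not_one_iff {l : List ℕ} {k : ℕ} :
    (l.length = k ∧ GoodW l) ∧ 1 ∉ l ↔ l.length = k ∧ Good l := by
  constructor
  · rintro ⟨⟨hlen, h1, hp1, hp2, hp3⟩, hno⟩
    refine ⟨hlen, ?_, hp1, hp2⟩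
    intro x hx
    have := h1 x hx
    have hx1 : x ≠ 1 := fun e => hno (e ▸ hx)
    omega
  · rintro ⟨hlen, h2, hp1, hp2⟩
    refine ⟨⟨hlen, fun x hx => by have := h2 x hx; omega, hp1, hp2, ?_⟩, ?_⟩
    · intro i1 i2 i3 h12 h23 h3 e13 e2
      have := h2 _ (getD_mem (lt_trans h23 h3))
      omega
    · intro hmem
      have := h2 1 hmem
      omega

theorem card_list_one (k : ℕ) :
    Nat.card {l : List ℕ // l.length = k ∧ GoodW l ∧ 1 ∈ l}
      = catalan (k + 1) - catalan k := by
  classical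
  have hsum :
      Nat.card {l : List ℕ // l.length = k ∧ GoodW l}
        = Nat.card {l : List ℕ // l.length = k ∧ GoodW l ∧ 1 ∈ l}
          + Nat.card {l : List ℕ // l.length = k ∧ Good l} := by
    have e := (Equiv.sumCompl (fun a : {l : List ℕ // l.length = k ∧ GoodW l} => 1 ∈ a.1)).symm
    rw [Nat.card_congr e, Nat.card_sum]
    congr 1
    · exact Nat.card_congr ((Equiv.subtypeSubtypeEquivSubtypeInter _ _).trans
        (Equiv.subtypeEquivRight (fun l => by tauto)))
    · exact Nat.card_congr ((Equiv.subtypeSubtypeEquivSubtypeInter _ _).trans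
        (Equiv.subtypeEquivRight (fun l => goodW_not_one_iff)))
  rw [card_goodW, card_good] at hsum
  omega

/-! ### from functions on Fin to lists -/

theorem getD_ofFn {k : ℕ} (w : Fin k → ℕ) {i : ℕ} (h : i < k) :
    (List.ofFn w).getD i 0 = w ⟨i, h⟩ := by
  rw [List.getD_eq_getElem _ _ (by simpa using h)]
  simp


noncomputable def main_equiv (k : ℕ) :
    {w : Fin k → ℕ //
        (∀ i, 1 ≤ w i ∧ w i ≤ k + 1) ∧ (∃ i, w i = 1) ∧ WordP1 w ∧ WordP2 w ∧ WordP3 w} ≃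
    {l : List ℕ // l.length = k ∧ GoodW l ∧ 1 ∈ l} := by
  refine Equiv.ofBijective
    (fun a => ⟨List.ofFn a.1, by simp, ⟨?_, ?_, ?_, ?_⟩, ?_⟩) ⟨?_, ?_⟩
  · -- letters ≥ 1
    intro x hx
    obtain ⟨i, rfl⟩ := List.mem_ofFn.1 hx
    exact (a.2.1 i).1
  · -- LP1
    intro i t ht hlt
    by_cases hi : i < k
    swap
    · rw [List.getD_eq_default _ _ (by simpa using by omega)] at hlt; omega
    rw [getD_ofFn a.1 hi] at hlt
    obtain ⟨j, hj, hje⟩ := a.2.2.2.1 ⟨i, hi⟩ t ht hlt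
    refine ⟨j.1, by simpa [Fin.lt_def] using hj, ?_⟩
    rw [getD_ofFn a.1 j.isLt]
    simpa using hje
  · -- LP2
    intro i1 i2 i3 i4 h12 h23 h34 h4 e13 e24
    simp only [List.length_ofFn] at h4
    have k1 : i1 < k := by omega
    have k2 : i2 < k := by omega
    have k3 : i3 < k := by omega
    rw [getD_ofFn a.1 k1, getD_ofFn a.1 k3] at e13
    rw [getD_ofFn a.1 k2, getD_ofFn a.1 h4] at e24
    rw [getD_ofFn a.1 k1, getD_ofFn a.1 k2]
    exact a.2.2.2.2.1 _ _ _ _ (by simpa [Fin.lt_def] using h12)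
      (by simpa [Fin.lt_def] using h23) (by simpa [Fin.lt_def] using h34) e13 e24
  · -- LP3
    intro i1 i2 i3 h12 h23 h3 e13 e2
    simp only [List.length_ofFn] at h3
    have k1 : i1 < k := by omega
    have k2 : i2 < k := by omega
    rw [getD_ofFn a.1 k1, getD_ofFn a.1 h3] at e13
    rw [getD_ofFn a.1 k2] at e2
    rw [getD_ofFn a.1 k1]
    exact a.2.2.2.2.2 _ _ _ (by simpa [Fin.lt_def] using h12)
      (by simpa [Fin.lt_def] using h23) e13 e2
  · -- 1 ∈
    obtain ⟨i, hi⟩ := a.2.2.1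
    exact List.mem_ofFn.2 ⟨i, hi⟩
  · -- injective
    intro a b h
    apply Subtype.ext
    funext i
    have h' := congrArg (fun s => s.1.getD i.1 0) h
    simp only at h'
    rw [getD_ofFn a.1 i.isLt, getD_ofFn b.1 i.isLt] at h'
    simpa using h'
  · -- surjective
    rintro ⟨l, hlen, ⟨hw1, hp1, hp2, hp3⟩, hmem⟩
    refine ⟨⟨fun i => l.getD i.1 0, ⟨?_, ?_, ?_, ?_, ?_⟩⟩, ?_⟩
    · intro i
      constructor
      · exact hw1 _ (getD_mem (by rw [hlen]; exact i.isLt))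
      · show l.getD i.1 0 ≤ k + 1
        have := hp1.le_pos i.1
        have := i.isLt
        omega
    · obtain ⟨j, hj, hje⟩ := mem_getD hmem
      exact ⟨⟨j, by omega⟩, hje⟩
    · intro i t ht hlt
      obtain ⟨j, hj, hje⟩ := hp1 i.1 t ht hlt
      have := i.isLt
      exact ⟨⟨j, by omega⟩, hj, hje⟩
    · intro i1 i2 i3 i4 h12 h23 h34 e13 e24
      exact hp2 i1.1 i2.1 i3.1 i4.1 h12 h23 h34 (by rw [hlen]; exact i4.isLt) e13 e24
    · intro i1 i2 i3 h12 h23 e13 e2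
      exact hp3 i1.1 i2.1 i3.1 h12 h23 (by rw [hlen]; exact i3.isLt) e13 e2
    · apply Subtype.ext
      apply list_ext (by simpa using hlen.symm)
      intro i hi
      simp only [List.length_ofFn] at hi
      rw [getD_ofFn _ hi]

end CatWords

/-- The number of words of length `k` over `{1,…,k+1}` containing at least one
letter `1` and satisfying P1, P2 and P3 equals `C_{k+1} − C_k`. -/
theorem card_words_P123_with_one (k : ℕ) :
    Nat.card {w : Fin k → ℕ //
        (∀ i, 1 ≤ w i ∧ w i ≤ k + 1) ∧ (∃ i, w i = 1) ∧ WordP1 w ∧ WordP2 w ∧ WordP3 w}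
      = catalan (k + 1) - catalan k := by
  rw [← CatWords.card_list_one k]
  exact Nat.card_congr (CatWords.main_equiv k)
end

section
/- Let A be the 3×3 transfer matrix [[0,1,1],[1,1,0],[1,0,1]] (or the specific adjacency structure of the digraph D^{c,Ext}_2 with one admissible closed-walk configuration). The number of contractible Hamiltonian cycles of P_3 × C_n is h_2^c(n) = (n/4)·(√2)^n·(1+(−1)^n), i.e., h_2^c(n) = n·2^{n/2−1} for even n and 0 for odd n. -/
open SimpleGraph

/-- The grid cylinder graph `P_m × C_n` on vertex set `Fin m × Fin n`
(rows indexed by `Fin m`, columns cyclically by `Fin n`). -/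
def cylGraph (m n : ℕ) : SimpleGraph (Fin m × Fin n) :=
  (SimpleGraph.pathGraph m).boxProd (SimpleGraph.cycleGraph n)

/-- `H` is a Hamiltonian cycle of `G`, encoded as a connected spanning
subgraph in which every vertex has exactly two neighbours. -/
def IsHamCycleSub {V : Type*} (G H : SimpleGraph V) : Prop :=
  H ≤ G ∧ H.Connected ∧ ∀ v, (H.neighborSet v).ncard = 2

/-- The number of edges of `H` crossing the cut between column `n-1` and column `0`. -/
noncomputable def crossNum (m n : ℕ) [NeZero n] (H : SimpleGraph (Fin m × Fin n)) : ℕ :=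
  Set.ncard {i : Fin m | H.Adj (i, -1) (i, 0)}

/-- A cycle drawn on the cylinder is contractible iff it crosses a fixed
meridian cut an even number of times. -/
def IsContractible (m n : ℕ) [NeZero n] (H : SimpleGraph (Fin m × Fin n)) : Prop :=
  Even (crossNum m n H)

section Tools
open Classical
variable {V : Type*}
open SimpleGraph Classical



private lemma pc_fin (p : Prop) (c : V) : ({u | p ∧ u = c} : Set V).Finite :=
  (Set.finite_singleton c).subset (by rintro u ⟨_, rfl⟩; simp)

private lemma pc_ncard (p : Prop) [Decidable p] (c : V) :
    ({u | p ∧ u = c} : Set V).ncard = if p then 1 else 0 := by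
  by_cases h : p <;> simp [h]

private lemma pc_disj {c d : V} (p q : Prop) (hcd : c ≠ d) :
    Disjoint ({u | p ∧ u = c} : Set V) {u | q ∧ u = d} := by
  rw [Set.disjoint_left]
  rintro u ⟨_, rfl⟩ ⟨_, h⟩
  exact hcd h
  
lemma ncard_adj3 (H : SimpleGraph V) (v c1 c2 c3 : V)
    (h12 : c1 ≠ c2) (h13 : c1 ≠ c3) (h23 : c2 ≠ c3)
    (hsub : ∀ u, H.Adj v u → u = c1 ∨ u = c2 ∨ u = c3) :
    (H.neighborSet v).ncard =
      (if H.Adj v c1 then 1 else 0) + (if H.Adj v c2 then 1 else 0)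
        + (if H.Adj v c3 then 1 else 0) := by
  classical
  have hset : H.neighborSet v =
      ({u | (H.Adj v c1 ∧ u = c1)} ∪ {u | (H.Adj v c2 ∧ u = c2)}) ∪ {u | (H.Adj v c3 ∧ u = c3)} := by
    ext u
    simp only [mem_neighborSet, Set.mem_union, Set.mem_setOf_eq]
    constructor
    · intro h
      rcases hsub u h with rfl | rfl | rfl
      · exact Or.inl (Or.inl ⟨h, rfl⟩)
      · exact Or.inl (Or.inr ⟨h, rfl⟩)
      · exact Or.inr ⟨h, rfl⟩
    · rintro ((⟨h, rfl⟩ | ⟨h, rfl⟩) | ⟨h, rfl⟩) <;> exact h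
  rw [hset,
    Set.ncard_union_eq (Disjoint.union_left (pc_disj _ _ h13) (pc_disj _ _ h23))
      ((pc_fin _ _).union (pc_fin _ _)) (pc_fin _ _),
    Set.ncard_union_eq (pc_disj _ _ h12) (pc_fin _ _) (pc_fin _ _),
    pc_ncard, pc_ncard, pc_ncard]

lemma ncard_adj4 (H : SimpleGraph V) (v c1 c2 c3 c4 : V)
    (h12 : c1 ≠ c2) (h13 : c1 ≠ c3) (h14 : c1 ≠ c4) (h23 : c2 ≠ c3) (h24 : c2 ≠ c4)
    (h34 : c3 ≠ c4)
    (hsub : ∀ u, H.Adj v u → u = c1 ∨ u = c2 ∨ u = c3 ∨ u = c4) :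
    (H.neighborSet v).ncard =
      (if H.Adj v c1 then 1 else 0) + (if H.Adj v c2 then 1 else 0)
        + (if H.Adj v c3 then 1 else 0) + (if H.Adj v c4 then 1 else 0) := by
  classical
  have hset : H.neighborSet v =
      (({u | (H.Adj v c1 ∧ u = c1)} ∪ {u | (H.Adj v c2 ∧ u = c2)})
        ∪ {u | (H.Adj v c3 ∧ u = c3)}) ∪ {u | (H.Adj v c4 ∧ u = c4)} := by
    ext u
    simp only [mem_neighborSet, Set.mem_union, Set.mem_setOf_eq]
    constructor
    · intro h
      rcases hsub u h with rfl | rfl | rfl | rfl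
      · exact Or.inl (Or.inl (Or.inl ⟨h, rfl⟩))
      · exact Or.inl (Or.inl (Or.inr ⟨h, rfl⟩))
      · exact Or.inl (Or.inr ⟨h, rfl⟩)
      · exact Or.inr ⟨h, rfl⟩
    · rintro (((⟨h, rfl⟩ | ⟨h, rfl⟩) | ⟨h, rfl⟩) | ⟨h, rfl⟩) <;> exact h
  rw [hset,
    Set.ncard_union_eq
      (Disjoint.union_left (Disjoint.union_left (pc_disj _ _ h14) (pc_disj _ _ h24))
        (pc_disj _ _ h34))
      (((pc_fin _ _).union (pc_fin _ _)).union (pc_fin _ _)) (pc_fin _ _),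
    Set.ncard_union_eq (Disjoint.union_left (pc_disj _ _ h13) (pc_disj _ _ h23))
      ((pc_fin _ _).union (pc_fin _ _)) (pc_fin _ _),
    Set.ncard_union_eq (pc_disj _ _ h12) (pc_fin _ _) (pc_fin _ _),
    pc_ncard, pc_ncard, pc_ncard, pc_ncard]

lemma ncard_pred3 (P : Fin 3 → Prop) :
    ({i | P i} : Set (Fin 3)).ncard =
      (if P 0 then 1 else 0) + (if P 1 then 1 else 0) + (if P 2 then 1 else 0) := by
  classical
  have hset : ({i | P i} : Set (Fin 3)) =
      ({i | P 0 ∧ i = 0} ∪ {i | P 1 ∧ i = 1}) ∪ {i | P 2 ∧ i = 2} := by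
    ext i
    fin_cases i <;> simp
  rw [hset,
    Set.ncard_union_eq (Disjoint.union_left (pc_disj _ _ (by decide)) (pc_disj _ _ (by decide)))
      ((pc_fin _ _).union (pc_fin _ _)) (pc_fin _ _),
    Set.ncard_union_eq (pc_disj _ _ (by decide)) (pc_fin _ _) (pc_fin _ _),
    pc_ncard, pc_ncard, pc_ncard]

end Tools
open SimpleGraph


namespace CHC
open scoped Fin.NatCast Fin.CommRing
variable {n : ℕ} [NeZero n]

lemma npos : 0 < n := Nat.pos_of_ne_zero (NeZero.ne n)

lemma val_one (hn : 3 ≤ n) : (1 : Fin n).val = 1 := by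
  have : ((1:ℕ) : Fin n).val = 1 % n := Fin.val_natCast 1 n
  simpa [Nat.mod_eq_of_lt (by omega : 1 < n)] using this

lemma cyc_adj (hn : 3 ≤ n) (a b : Fin n) :
    (cycleGraph n).Adj a b ↔ b = a - 1 ∨ b = a + 1 := by
  rw [cycleGraph_adj']
  constructor
  · rintro (h | h)
    · left
      have h1 : a - b = 1 := Fin.ext (by rw [h, val_one hn])
      rw [← h1, sub_sub_cancel]
    · right
      have h1 : b - a = 1 := Fin.ext (by rw [h, val_one hn])
      rw [← h1]; ring
  · rintro (rfl | rfl)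
    · left; rw [sub_sub_cancel, val_one hn]
    · right; rw [add_sub_cancel_left, val_one hn]

lemma path3_adj (a b : Fin 3) :
    (pathGraph 3).Adj a b ↔
      (a = 0 ∧ b = 1) ∨ (a = 1 ∧ b = 0) ∨ (a = 1 ∧ b = 2) ∨ (a = 2 ∧ b = 1) := by
  rw [pathGraph_adj]
  fin_cases a <;> fin_cases b <;> simp

lemma cyl_adj (hn : 3 ≤ n) (u v : Fin 3 × Fin n) :
    (cylGraph 3 n).Adj u v ↔
      (((u.1 = 0 ∧ v.1 = 1) ∨ (u.1 = 1 ∧ v.1 = 0) ∨ (u.1 = 1 ∧ v.1 = 2) ∨ (u.1 = 2 ∧ v.1 = 1))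
          ∧ u.2 = v.2)
        ∨ ((v.2 = u.2 - 1 ∨ v.2 = u.2 + 1) ∧ u.1 = v.1) := by
  show (pathGraph 3).Adj u.1 v.1 ∧ u.2 = v.2 ∨ (cycleGraph n).Adj u.2 v.2 ∧ u.1 = v.1 ↔ _
  rw [path3_adj, cyc_adj hn]



open SimpleGraph


variable {n : ℕ} [NeZero n]

lemma fadd_val (a b : Fin n) : (a + b).val = (a.val + b.val) % n := by rw [Fin.add_def]
lemma fsub_val (a b : Fin n) : (a - b).val = (a.val + (n - b.val)) % n := by
  rw [Fin.sub_def]; simp [Nat.add_comm]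
lemma fcast_val (k : ℕ) : ((k : Fin n)).val = k % n := Fin.val_natCast k n
lemma fone_val (hn : 3 ≤ n) : (1 : Fin n).val = 1 := by
  have h : ((1:ℕ) : Fin n).val = 1 % n := Fin.val_natCast 1 n
  simpa [Nat.mod_eq_of_lt (by omega : 1 < n)] using h

lemma val_add_one (hn : 3 ≤ n) (a : Fin n) :
    (a + 1).val = if a.val + 1 = n then 0 else a.val + 1 := by
  rw [fadd_val, fone_val hn]
  rcases eq_or_ne (a.val + 1) n with h | h
  · simp [h]
  · have := a.isLt
    rw [Nat.mod_eq_of_lt (by omega), if_neg h]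

lemma val_sub_one (hn : 3 ≤ n) (a : Fin n) :
    (a - 1).val = if a.val = 0 then n - 1 else a.val - 1 := by
  rw [fsub_val, fone_val hn]
  rcases eq_or_ne a.val 0 with h | h
  · rw [h, if_pos rfl]
    rw [Nat.zero_add, Nat.mod_eq_of_lt (by omega : n - 1 < n)]
  · have := a.isLt
    rw [if_neg h]
    have h2 : a.val + (n - 1) = n + (a.val - 1) := by omega
    rw [h2, Nat.add_mod_left, Nat.mod_eq_of_lt (by omega)]

lemma sub_add_cancel' (a : Fin n) : a - 1 + 1 = a := by ring
lemma add_sub_cancel'' (a : Fin n) : a + 1 - 1 = a := by ring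

lemma succ_ne (hn : 3 ≤ n) (a : Fin n) : a + 1 ≠ a := by
  intro h
  have h2 := congrArg Fin.val h
  rw [val_add_one hn] at h2
  have := a.isLt
  split at h2 <;> omega

lemma pred_ne (hn : 3 ≤ n) (a : Fin n) : a - 1 ≠ a := by
  intro h
  have h2 := congrArg (· + (1:Fin n)) h
  simp only [sub_add_cancel'] at h2
  exact succ_ne hn a h2.symm

lemma pred_ne_succ (hn : 3 ≤ n) (a : Fin n) : a - 1 ≠ a + 1 := by
  intro h
  have h2 := congrArg Fin.val h
  rw [val_add_one hn, val_sub_one hn] at h2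
  have := a.isLt
  split at h2 <;> split at h2 <;> omega

lemma fin_val_inj {a b : Fin n} (h : a.val = b.val) : a = b := Fin.ext h




open Classical in
noncomputable def iX (H : SimpleGraph (Fin 3 × Fin n)) (i : Fin 3) (j : Fin n) : ℕ :=
  if H.Adj (i, j) (i, j + 1) then 1 else 0
open Classical in
noncomputable def iA (H : SimpleGraph (Fin 3 × Fin n)) (j : Fin n) : ℕ :=
  if H.Adj (0, j) (1, j) then 1 else 0
open Classical in
noncomputable def iB (H : SimpleGraph (Fin 3 × Fin n)) (j : Fin n) : ℕ :=
  if H.Adj (1, j) (2, j) then 1 else 0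

variable {H : SimpleGraph (Fin 3 × Fin n)}

lemma iX_le (i j) : iX H i j ≤ 1 := by unfold iX; split <;> omega
lemma iA_le (j) : iA H j ≤ 1 := by unfold iA; split <;> omega
lemma iB_le (j) : iB H j ≤ 1 := by unfold iB; split <;> omega
lemma iX_eq_one {i j} : iX H i j = 1 ↔ H.Adj (i, j) (i, j + 1) := by
  unfold iX; split <;> simp_all
lemma iA_eq_one {j} : iA H j = 1 ↔ H.Adj (0, j) (1, j) := by
  unfold iA; split <;> simp_all
lemma iB_eq_one {j} : iB H j = 1 ↔ H.Adj (1, j) (2, j) := by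
  unfold iB; split <;> simp_all

lemma cand_top (hn : 3 ≤ n) (hle : H ≤ cylGraph 3 n) (j : Fin n) :
    ∀ u, H.Adj (0, j) u → u = ((0 : Fin 3), j - 1) ∨ u = (0, j + 1) ∨ u = (1, j) := by
  intro u h
  have h2 := (cyl_adj hn _ _).1 (hle h)
  obtain ⟨hrow, hcol⟩ | ⟨hcol, hrow⟩ := h2
  · right; right
    rcases hrow with ⟨_, h1⟩ | ⟨h1, _⟩ | ⟨h1, _⟩ | ⟨h1, _⟩
    · exact Prod.ext h1 hcol.symm
    all_goals { exact absurd h1 (by simp) }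
  · rcases hcol with h1 | h1
    · exact Or.inl (Prod.ext hrow.symm h1)
    · exact Or.inr (Or.inl (Prod.ext hrow.symm h1))

lemma cand_bot (hn : 3 ≤ n) (hle : H ≤ cylGraph 3 n) (j : Fin n) :
    ∀ u, H.Adj (2, j) u → u = ((2 : Fin 3), j - 1) ∨ u = (2, j + 1) ∨ u = (1, j) := by
  intro u h
  have h2 := (cyl_adj hn _ _).1 (hle h)
  obtain ⟨hrow, hcol⟩ | ⟨hcol, hrow⟩ := h2
  · right; right
    rcases hrow with ⟨h1, _⟩ | ⟨h1, _⟩ | ⟨h1, _⟩ | ⟨_, h1⟩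
    · exact absurd h1 (by simp)
    · exact absurd h1 (by simp)
    · exact absurd h1 (by simp)
    · exact Prod.ext h1 hcol.symm
  · rcases hcol with h1 | h1
    · exact Or.inl (Prod.ext hrow.symm h1)
    · exact Or.inr (Or.inl (Prod.ext hrow.symm h1))

lemma cand_mid (hn : 3 ≤ n) (hle : H ≤ cylGraph 3 n) (j : Fin n) :
    ∀ u, H.Adj (1, j) u →
      u = ((1 : Fin 3), j - 1) ∨ u = (1, j + 1) ∨ u = (0, j) ∨ u = (2, j) := by
  intro u h
  have h2 := (cyl_adj hn _ _).1 (hle h)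
  obtain ⟨hrow, hcol⟩ | ⟨hcol, hrow⟩ := h2
  · rcases hrow with ⟨h1, _⟩ | ⟨_, h1⟩ | ⟨_, h1⟩ | ⟨h1, _⟩
    · exact absurd h1 (by simp)
    · exact Or.inr (Or.inr (Or.inl (Prod.ext h1 hcol.symm)))
    · exact Or.inr (Or.inr (Or.inr (Prod.ext h1 hcol.symm)))
    · exact absurd h1 (by simp [Fin.ext_iff])
  · rcases hcol with h1 | h1
    · exact Or.inl (Prod.ext hrow.symm h1)
    · exact Or.inr (Or.inl (Prod.ext hrow.symm h1))

lemma eqTop (hn : 3 ≤ n) (hle : H ≤ cylGraph 3 n)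
    (hdeg : ∀ v, (H.neighborSet v).ncard = 2) (j : Fin n) :
    iX H 0 (j - 1) + iX H 0 j + iA H j = 2 := by
  have h := hdeg (0, j)
  rw [ncard_adj3 H (0, j) (0, j - 1) (0, j + 1) (1, j)
    (by simp [Prod.ext_iff, pred_ne_succ hn j])
    (by simp [Prod.ext_iff]) (by simp [Prod.ext_iff]) (cand_top hn hle j)] at h
  have e1 : H.Adj ((0 : Fin 3), j) ((0 : Fin 3), j - 1)
      ↔ H.Adj ((0 : Fin 3), j - 1) ((0 : Fin 3), (j - 1) + 1) := by
    rw [sub_add_cancel']; exact adj_comm H _ _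
  rw [propext e1] at h
  simp only [iX, iA]
  exact h

lemma eqBot (hn : 3 ≤ n) (hle : H ≤ cylGraph 3 n)
    (hdeg : ∀ v, (H.neighborSet v).ncard = 2) (j : Fin n) :
    iX H 2 (j - 1) + iX H 2 j + iB H j = 2 := by
  have h := hdeg (2, j)
  rw [ncard_adj3 H (2, j) (2, j - 1) (2, j + 1) (1, j)
    (by simp [Prod.ext_iff, pred_ne_succ hn j])
    (by simp [Prod.ext_iff]) (by simp [Prod.ext_iff]) (cand_bot hn hle j)] at h
  have e1 : H.Adj ((2 : Fin 3), j) ((2 : Fin 3), j - 1)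
      ↔ H.Adj ((2 : Fin 3), j - 1) ((2 : Fin 3), (j - 1) + 1) := by
    rw [sub_add_cancel']; exact adj_comm H _ _
  have e3 : H.Adj ((2 : Fin 3), j) ((1 : Fin 3), j)
      ↔ H.Adj ((1 : Fin 3), j) ((2 : Fin 3), j) := adj_comm H _ _
  rw [propext e1, propext e3] at h
  simp only [iX, iB]
  exact h

lemma eqMid (hn : 3 ≤ n) (hle : H ≤ cylGraph 3 n)
    (hdeg : ∀ v, (H.neighborSet v).ncard = 2) (j : Fin n) :
    iX H 1 (j - 1) + iX H 1 j + iA H j + iB H j = 2 := by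
  have h := hdeg (1, j)
  rw [ncard_adj4 H (1, j) (1, j - 1) (1, j + 1) (0, j) (2, j)
    (by simp [Prod.ext_iff, pred_ne_succ hn j])
    (by simp [Prod.ext_iff]) (by simp [Prod.ext_iff]) (by simp [Prod.ext_iff])
    (by simp [Prod.ext_iff]) (by simp [Prod.ext_iff, Fin.ext_iff]) (cand_mid hn hle j)] at h
  have e1 : H.Adj ((1 : Fin 3), j) ((1 : Fin 3), j - 1)
      ↔ H.Adj ((1 : Fin 3), j - 1) ((1 : Fin 3), (j - 1) + 1) := by
    rw [sub_add_cancel']; exact adj_comm H _ _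
  have e3 : H.Adj ((1 : Fin 3), j) ((0 : Fin 3), j)
      ↔ H.Adj ((0 : Fin 3), j) ((1 : Fin 3), j) := adj_comm H _ _
  rw [propext e1, propext e3] at h
  simp only [iX, iA, iB]
  exact h

lemma crossNum_eq : crossNum 3 n H = iX H 0 (-1) + iX H 1 (-1) + iX H 2 (-1) := by
  unfold crossNum
  rw [ncard_pred3 (fun i => H.Adj (i, -1) (i, 0))]
  simp only [iX]
  rw [show ((-1 : Fin n)) + 1 = 0 by ring]


noncomputable def sC (H : SimpleGraph (Fin 3 × Fin n)) (j : Fin n) : ℤ :=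
  (iX H 0 j : ℤ) + (iX H 2 j : ℤ) - (iX H 1 j : ℤ)

section Forward
variable (hn : 3 ≤ n) (hle : H ≤ cylGraph 3 n)
  (hdeg : ∀ v, (H.neighborSet v).ncard = 2)
include hn hle hdeg

lemma s_rec (j : Fin n) : sC H (j - 1) + sC H j = 2 := by
  have t := eqTop hn hle hdeg j
  have b := eqBot hn hle hdeg j
  have m := eqMid hn hle hdeg j
  unfold sC
  omega

lemma s_step (j : Fin n) : sC H (j + 1) = 2 - sC H j := by
  have h := s_rec hn hle hdeg (j + 1)
  rw [add_sub_cancel''] at h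
  omega

lemma s_offset (j0 : Fin n) (k : ℕ) :
    sC H (j0 + (k : Fin n)) = if k % 2 = 0 then sC H j0 else 2 - sC H j0 := by
  induction k with
  | zero => simp
  | succ k ih =>
    have e : ((k + 1 : ℕ) : Fin n) = (k : Fin n) + 1 := by push_cast; ring
    rw [e, ← add_assoc, s_step hn hle hdeg, ih]
    by_cases hk : k % 2 = 0
    · rw [if_pos hk, if_neg (show ¬((k + 1) % 2 = 0) by omega)]
    · rw [if_neg hk, if_pos (show (k + 1) % 2 = 0 by omega)]
      ring

lemma s_all_one (hodd : ¬ Even n) (j : Fin n) : sC H j = 1 := by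
  have h := s_offset hn hle hdeg j n
  rw [Fin.natCast_self, add_zero] at h
  rw [if_neg (by rw [Nat.even_iff] at hodd; omega)] at h
  omega

lemma odd_case (hodd : ¬ Even n) (hcontr : Even (crossNum 3 n H)) : False := by
  have h := s_all_one hn hle hdeg hodd (-1)
  have hc := crossNum_eq (H := H)
  obtain ⟨t, ht⟩ := hcontr
  unfold sC at h
  omega

lemma s_vals (heven : Even n) (hcontr : Even (crossNum 3 n H)) (j : Fin n) :
    sC H j = 0 ∨ sC H j = 2 := by
  have hm1 : sC H (-1) = 0 ∨ sC H (-1) = 2 := by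
    have hc := crossNum_eq (H := H)
    obtain ⟨t, ht⟩ := hcontr
    have b0 := iX_le (H := H) 0 (-1)
    have b1 := iX_le (H := H) 1 (-1)
    have b2 := iX_le (H := H) 2 (-1)
    unfold sC
    omega
  have e : ((-1 : Fin n) + (((j + 1).val : ℕ) : Fin n)) = j := by
    rw [Fin.cast_val_eq_self]; ring
  have h := s_offset hn hle hdeg (-1) (j + 1).val
  rw [e] at h
  split at h <;> omega

lemma mask2 {j : Fin n} (h2 : sC H j = 2) :
    iX H 0 j = 1 ∧ iX H 1 j = 0 ∧ iX H 2 j = 1 := by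
  have b0 := iX_le (H := H) 0 j
  have b1 := iX_le (H := H) 1 j
  have b2 := iX_le (H := H) 2 j
  unfold sC at h2
  omega

lemma mask0 {j : Fin n} (h0 : sC H j = 0) :
    (iX H 0 j = 0 ∧ iX H 1 j = 0 ∧ iX H 2 j = 0)
      ∨ (iX H 0 j = 1 ∧ iX H 1 j = 1 ∧ iX H 2 j = 0)
      ∨ (iX H 0 j = 0 ∧ iX H 1 j = 1 ∧ iX H 2 j = 1) := by
  have b0 := iX_le (H := H) 0 j
  have b1 := iX_le (H := H) 1 j
  have b2 := iX_le (H := H) 2 j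
  unfold sC at h0
  omega

omit hn hle hdeg in
lemma reach_closed {S : Set (Fin 3 × Fin n)}
    (hS : ∀ u v, H.Adj u v → u ∈ S → v ∈ S) {u v : Fin 3 × Fin n}
    (h : H.Reachable u v) (hu : u ∈ S) : v ∈ S := by
  obtain ⟨w⟩ := h
  induction w with
  | nil => exact hu
  | cons hadj _ ih => exact ih (hS _ _ hadj hu)

omit hdeg in
lemma edge_shape {u v : Fin 3 × Fin n} (h : H.Adj u v) :
    (v.2 = u.2 ∧ ((u.1 = 0 ∧ v.1 = 1) ∨ (u.1 = 1 ∧ v.1 = 0) ∨ (u.1 = 1 ∧ v.1 = 2)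
        ∨ (u.1 = 2 ∧ v.1 = 1)))
      ∨ (v.1 = u.1 ∧ (v.2 = u.2 + 1 ∨ u.2 = v.2 + 1)) := by
  have h2 := (cyl_adj hn _ _).1 (hle h)
  obtain ⟨hrow, hcol⟩ | ⟨hcol, hrow⟩ := h2
  · exact Or.inl ⟨hcol.symm, hrow⟩
  · refine Or.inr ⟨hrow.symm, ?_⟩
    rcases hcol with h1 | h1
    · right; rw [h1, sub_add_cancel']
    · left; exact h1

omit hn hle hdeg in
lemma adj_toX {i : Fin 3} {j : Fin n} (h : H.Adj (i, j) (i, j + 1)) : iX H i j = 1 :=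
  iX_eq_one.2 h

lemma zero_unique (hconn : H.Connected) {j0 j1 : Fin n}
    (h0 : ∀ i, iX H i j0 = 0) (h1 : ∀ i, iX H i j1 = 0) : j0 = j1 := by
  by_contra hne
  set d := (j1 - j0).val with hd
  have npos : 0 < n := Nat.pos_of_ne_zero (NeZero.ne n)
  have fd : d ≠ 0 := by
    intro h
    apply hne
    have hz : j1 - j0 = 0 := Fin.ext (by rw [← hd, h]; simp)
    exact (sub_eq_zero.1 hz).symm
  have fdlt : d < n := (j1 - j0).isLt
  have fq0 : ((j0 + 1) - (j0 + 1)).val = 0 := by simp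
  have fqj0 : (j0 - (j0 + 1)).val = n - 1 := by
    have e : j0 - (j0 + 1) = (0 : Fin n) - 1 := by ring
    rw [e, val_sub_one hn]
    simp
  have fqinj : ∀ c c' : Fin n, (c - (j0 + 1)).val = (c' - (j0 + 1)).val → c = c' := by
    intro c c' h
    have h2 : c - (j0 + 1) = c' - (j0 + 1) := Fin.ext h
    exact sub_left_inj.1 h2
  have fqj1 : (j1 - (j0 + 1)).val = d - 1 := by
    have e : j1 - (j0 + 1) = (j1 - j0) - 1 := by ring
    rw [e, val_sub_one hn, if_neg (by rw [← hd]; exact fd), ← hd]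
  have fstep : ∀ c : Fin n, c ≠ j0 → ((c + 1) - (j0 + 1)).val = (c - (j0 + 1)).val + 1 := by
    intro c hc
    have hcnd : ¬((c - (j0 + 1)).val + 1 = n) := by
      intro hwrap
      refine hc (fqinj c j0 ?_)
      omega
    have e : (c + 1) - (j0 + 1) = (c - (j0 + 1)) + 1 := by ring
    rw [e, val_add_one hn, if_neg hcnd]
  have hcol_ne : ∀ (i : Fin 3) (c : Fin n), iX H i c = 1 → c ≠ j0 ∧ c ≠ j1 := by
    intro i c hx
    constructor <;> rintro rfl
    · rw [h0 i] at hx; omega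
    · rw [h1 i] at hx; omega
  set S : Set (Fin 3 × Fin n) := {v | (v.2 - (j0 + 1)).val < d} with hS
  have hclosed : ∀ u v, H.Adj u v → u ∈ S → v ∈ S := by
    rintro ⟨ui, uj⟩ ⟨vi, vj⟩ hadj hu
    rcases edge_shape hn hle hadj with ⟨hc, _⟩ | ⟨hr, hc | hc⟩
    · simp only [hS, Set.mem_setOf_eq] at hu ⊢
      rw [show vj = uj from hc]
      exact hu
    · simp only at hr hc
      rw [hr, hc] at hadj
      have hx : iX H ui uj = 1 := adj_toX hadj
      obtain ⟨hne0, hne1⟩ := hcol_ne _ _ hx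
      have hstep := fstep uj hne0
      have hnotend : (uj - (j0 + 1)).val ≠ d - 1 := fun h => hne1 (fqinj _ _ (h.trans fqj1.symm))
      simp only [hS, Set.mem_setOf_eq] at hu ⊢
      rw [hc]
      omega
    · simp only at hr hc
      rw [hr, hc] at hadj
      have hx : iX H ui vj = 1 := adj_toX hadj.symm
      obtain ⟨hne0, hne1⟩ := hcol_ne _ _ hx
      have hstep := fstep vj hne0
      simp only [hS, Set.mem_setOf_eq] at hu ⊢
      rw [hc] at hu
      omega
  have hmem : ((0 : Fin 3), j0 + 1) ∈ S := by
    simp only [hS, Set.mem_setOf_eq, fq0]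
    omega
  have hreach := hconn.preconnected ((0 : Fin 3), j0 + 1) ((0 : Fin 3), j0)
  have hfin := reach_closed hclosed hreach hmem
  simp only [hS, Set.mem_setOf_eq, fqj0] at hfin
  omega

omit hn hle hdeg in
lemma allz {j : Fin n} (a : iX H 0 j = 0) (b : iX H 1 j = 0) (c : iX H 2 j = 0) :
    ∀ i, iX H i j = 0 := by
  intro i
  fin_cases i
  exacts [a, b, c]

lemma mid_step (heven : Even n) (hcontr : Even (crossNum 3 n H)) (j : Fin n)
    (hx : iX H 1 j = 1) : iA H j = iA H (j + 1) := by
  have sj0 : sC H j = 0 := by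
    rcases s_vals hn hle hdeg heven hcontr j with h | h
    · exact h
    · have b0 := iX_le (H := H) 0 j
      have b2 := iX_le (H := H) 2 j
      unfold sC at h ⊢
      omega
  have sprev : sC H (j - 1) = 2 := by
    have := s_rec hn hle hdeg j
    omega
  have snext : sC H (j + 1) = 2 := by
    rw [s_step hn hle hdeg, sj0]
    norm_num
  have m1 := (mask2 hn hle hdeg sprev).1
  have m2 := (mask2 hn hle hdeg snext).1
  have t1 := eqTop hn hle hdeg j
  have t2 := eqTop hn hle hdeg (j + 1)
  rw [add_sub_cancel''] at t2
  omega

lemma noAB (heven : Even n) (hcontr : Even (crossNum 3 n H))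
    (hnz : ∀ j0 : Fin n, ¬ (∀ i, iX H i j0 = 0)) (j : Fin n) :
    ¬(iA H j = 1 ∧ iB H j = 1) := by
  rintro ⟨ha, hb⟩
  have m := eqMid hn hle hdeg j
  rcases s_vals hn hle hdeg heven hcontr j with h | h
  · have b0 := iX_le (H := H) 0 j
    have b1 := iX_le (H := H) 1 j
    have b2 := iX_le (H := H) 2 j
    unfold sC at h
    exact hnz j (allz (by omega) (by omega) (by omega))
  · obtain ⟨m0, m1, m2⟩ := mask2 hn hle hdeg h
    have t := eqTop hn hle hdeg j
    have b := eqBot hn hle hdeg j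
    exact hnz (j - 1) (allz (by omega) (by omega) (by omega))

lemma zero_exists (heven : Even n) (hcontr : Even (crossNum 3 n H))
    (hconn : H.Connected) : ∃ j0 : Fin n, ∀ i, iX H i j0 = 0 := by
  by_contra hex
  push_neg at hex
  have hnz : ∀ j0 : Fin n, ¬ (∀ i, iX H i j0 = 0) := fun j0 h => by
    obtain ⟨i, hi⟩ := hex j0
    exact hi (h i)
  set S : Set (Fin 3 × Fin n) := {v | v.1 = 0 ∨ (v.1 = 1 ∧ iA H v.2 = 1)} with hS
  have hclosed : ∀ u v, H.Adj u v → u ∈ S → v ∈ S := by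
    rintro ⟨ui, uj⟩ ⟨vi, vj⟩ hadj hu
    rcases edge_shape hn hle hadj with ⟨hc, hrows⟩ | ⟨hr, hc | hc⟩
    · simp only at hc
      rcases hrows with ⟨h1, h2⟩ | ⟨h1, h2⟩ | ⟨h1, h2⟩ | ⟨h1, h2⟩ <;> simp only at h1 h2
      · -- (0,1) vertical: va edge present
        rw [h1, h2, hc] at hadj
        refine Or.inr ⟨h2, ?_⟩
        rw [hc]
        exact iA_eq_one.2 hadj
      · exact Or.inl h2
      · -- (1,2): from u ∈ S get iA = 1, edge gives iB = 1, contradiction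
        rw [h1, h2, hc] at hadj
        rw [hS, Set.mem_setOf_eq] at hu
        simp only [h1] at hu
        rcases hu with h | ⟨_, hA⟩
        · exact absurd h (by decide)
        · exact absurd ⟨hA, iB_eq_one.2 hadj⟩
            (noAB hn hle hdeg heven hcontr hnz uj)
      · rw [hS, Set.mem_setOf_eq] at hu
        simp only [h1] at hu
        rcases hu with h | ⟨h, _⟩ <;> exact absurd h (by decide)
    · -- horizontal, vj = uj + 1
      simp only at hr hc
      rw [hS, Set.mem_setOf_eq] at hu ⊢
      simp only at hu ⊢
      rcases hu with h | ⟨h, hA⟩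
      · exact Or.inl (hr.trans h)
      · refine Or.inr ⟨hr.trans h, ?_⟩
        rw [h] at hadj hr
        rw [hr, hc] at hadj
        have hx : iX H 1 uj = 1 := adj_toX hadj
        rw [hc, ← mid_step hn hle hdeg heven hcontr uj hx]
        exact hA
    · -- horizontal, uj = vj + 1
      simp only at hr hc
      rw [hS, Set.mem_setOf_eq] at hu ⊢
      simp only at hu ⊢
      rcases hu with h | ⟨h, hA⟩
      · exact Or.inl (hr.trans h)
      · refine Or.inr ⟨hr.trans h, ?_⟩
        rw [h] at hadj hr
        rw [hr, hc] at hadj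
        have hx : iX H 1 vj = 1 := adj_toX hadj.symm
        have := mid_step hn hle hdeg heven hcontr vj hx
        rw [← hc] at this
        omega
  have hmem : ((0 : Fin 3), (0 : Fin n)) ∈ S := Or.inl rfl
  have hreach := hconn.preconnected ((0 : Fin 3), (0 : Fin n)) ((2 : Fin 3), (0 : Fin n))
  have hfin := reach_closed hclosed hreach hmem
  rw [hS, Set.mem_setOf_eq] at hfin
  rcases hfin with h | ⟨h, _⟩
  · exact absurd (show (2 : Fin 3) = 0 from h) (by decide)
  · exact absurd (show (2 : Fin 3) = 1 from h) (by decide)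

end Forward


/-! ## The model family of contractible Hamiltonian cycles -/

def XB (g : ℕ → Bool) (k : ℕ) : Fin 3 → Bool := fun i =>
  if k = 0 then false
  else if k % 2 = 1 then (if i = 1 then false else true)
  else (if i = 0 then g (k / 2 - 1) else if i = 1 then true else !g (k / 2 - 1))

def vidx (k : ℕ) : ℕ := (if k % 2 = 0 then k else k - 1) / 2 - 1

def VAB (g : ℕ → Bool) (k : ℕ) : Bool := if k ≤ 1 then true else !g (vidx k)

def VBB (g : ℕ → Bool) (k : ℕ) : Bool := if k ≤ 1 then true else g (vidx k)

def modelRel (n : ℕ) [NeZero n] (j0 : Fin n) (g : ℕ → Bool)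
    (u v : Fin 3 × Fin n) : Prop :=
  (v.1 = u.1 ∧ v.2 = u.2 + 1 ∧ XB g ((u.2 - j0).val) u.1 = true)
    ∨ (v.2 = u.2 ∧ ((u.1 = 0 ∧ v.1 = 1 ∧ VAB g ((u.2 - j0).val) = true)
        ∨ (u.1 = 1 ∧ v.1 = 2 ∧ VBB g ((u.2 - j0).val) = true)))

def model (n : ℕ) [NeZero n] (j0 : Fin n) (g : ℕ → Bool) :
    SimpleGraph (Fin 3 × Fin n) :=
  SimpleGraph.fromRel (modelRel n j0 g)

variable {j0 : Fin n} {g : ℕ → Bool}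

lemma succ_succ_ne (hn : 3 ≤ n) (a : Fin n) : a + 1 + 1 ≠ a := by
  intro h
  have h2 := congrArg Fin.val h
  rw [val_add_one hn, val_add_one hn] at h2
  have := a.isLt
  split at h2 <;> split at h2 <;> omega

lemma model_le (hn : 3 ≤ n) : model n j0 g ≤ cylGraph 3 n := by
  rintro ⟨ui, uj⟩ ⟨vi, vj⟩ ⟨hne, h⟩
  rw [cyl_adj hn]
  rcases h with (⟨h1, h2, _⟩ | ⟨h1, ⟨h2, h3, _⟩ | ⟨h2, h3, _⟩⟩)
    | (⟨h1, h2, _⟩ | ⟨h1, ⟨h2, h3, _⟩ | ⟨h2, h3, _⟩⟩)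
  · simp only at h1 h2 ⊢
    exact Or.inr ⟨Or.inr h2, h1.symm⟩
  · simp only at h1 h2 h3 ⊢
    exact Or.inl ⟨Or.inl ⟨h2, h3⟩, h1.symm⟩
  · simp only at h1 h2 h3 ⊢
    exact Or.inl ⟨Or.inr (Or.inr (Or.inl ⟨h2, h3⟩)), h1.symm⟩
  · simp only at h1 h2 ⊢
    refine Or.inr ⟨Or.inl ?_, h1⟩
    rw [h2, add_sub_cancel'']
  · simp only at h1 h2 h3 ⊢
    exact Or.inl ⟨Or.inr (Or.inl ⟨h3, h2⟩), h1⟩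
  · simp only at h1 h2 h3 ⊢
    exact Or.inl ⟨Or.inr (Or.inr (Or.inr ⟨h3, h2⟩)), h1⟩

lemma model_adj_h (hn : 3 ≤ n) (i : Fin 3) (j : Fin n) :
    (model n j0 g).Adj (i, j) (i, j + 1) ↔ XB g ((j - j0).val) i = true := by
  constructor
  · rintro ⟨hne, h | h⟩
    · rcases h with ⟨h1, h2, h3⟩ | ⟨h1, _⟩
      · exact h3
      · exact absurd h1 (succ_ne hn j)
    · rcases h with ⟨h1, h2, h3⟩ | ⟨h1, _⟩
      · simp only at h2
        exact absurd h2.symm (succ_succ_ne hn j)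
      · exact absurd h1.symm (succ_ne hn j)
  · intro hx
    refine ⟨by simp [Prod.ext_iff, (succ_ne hn j).symm], Or.inl (Or.inl ⟨rfl, rfl, hx⟩)⟩

lemma model_adj_va (hn : 3 ≤ n) (j : Fin n) :
    (model n j0 g).Adj (0, j) (1, j) ↔ VAB g ((j - j0).val) = true := by
  constructor
  · rintro ⟨hne, h | h⟩
    · rcases h with ⟨h1, _, _⟩ | ⟨_, ⟨_, _, h3⟩ | ⟨h1, _, _⟩⟩
      · exact absurd (show (1 : Fin 3) = 0 from h1) (by decide)
      · exact h3
      · exact absurd (show (0 : Fin 3) = 1 from h1) (by decide)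
    · rcases h with ⟨h1, _, _⟩ | ⟨_, ⟨h1, _, _⟩ | ⟨_, h1, _⟩⟩
      · exact absurd (show (0 : Fin 3) = 1 from h1) (by decide)
      · exact absurd (show (1 : Fin 3) = 0 from h1) (by decide)
      · exact absurd (show (0 : Fin 3) = 2 from h1) (by decide)
  · intro hx
    exact ⟨by simp [Prod.ext_iff], Or.inl (Or.inr ⟨rfl, Or.inl ⟨rfl, rfl, hx⟩⟩)⟩

lemma model_adj_vb (hn : 3 ≤ n) (j : Fin n) :
    (model n j0 g).Adj (1, j) (2, j) ↔ VBB g ((j - j0).val) = true := by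
  constructor
  · rintro ⟨hne, h | h⟩
    · rcases h with ⟨h1, _, _⟩ | ⟨_, ⟨h1, _, _⟩ | ⟨_, _, h3⟩⟩
      · exact absurd (show (2 : Fin 3) = 1 from h1) (by decide)
      · exact absurd (show (1 : Fin 3) = 0 from h1) (by decide)
      · exact h3
    · rcases h with ⟨h1, _, _⟩ | ⟨_, ⟨h1, _, _⟩ | ⟨h1, _, _⟩⟩
      · exact absurd (show (1 : Fin 3) = 2 from h1) (by decide)
      · exact absurd (show (2 : Fin 3) = 0 from h1) (by decide)
      · exact absurd (show (2 : Fin 3) = 1 from h1) (by decide)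
  · intro hx
    exact ⟨by simp [Prod.ext_iff], Or.inl (Or.inr ⟨rfl, Or.inr ⟨rfl, rfl, hx⟩⟩)⟩


def prevOff (n k : ℕ) : ℕ := if k = 0 then n - 1 else k - 1

lemma sum_top {g : ℕ → Bool} (hn : 3 ≤ n) (he : n % 2 = 0) {k : ℕ} (hk : k < n) :
    (XB g (prevOff n k) 0).toNat + (XB g k 0).toNat + (VAB g k).toNat = 2 := by
  rcases eq_or_ne k 0 with rfl | hk0
  · have h1 : n - 1 ≠ 0 := by omega
    have h2 : (n - 1) % 2 = 1 := by omega
    simp [XB, VAB, prevOff, h1, h2]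
  rcases eq_or_ne k 1 with rfl | hk1
  · simp [XB, VAB, prevOff]
  by_cases hpar : k % 2 = 0
  · have e1 : k - 1 ≠ 0 := by omega
    have e2 : (k - 1) % 2 = 1 := by omega
    have e3 : ¬(k ≤ 1) := by omega
    have e4 : ¬(k % 2 = 1) := by omega
    simp only [XB, VAB, vidx, prevOff, if_neg hk0, if_neg e1, if_pos e2, if_neg e4,
      if_pos hpar, if_neg e3]
    cases g (k / 2 - 1) <;> simp
  · have e1 : (k - 1) % 2 = 0 := by omega
    have e1' : ¬((k - 1) % 2 = 1) := by omega
    have e2 : k - 1 ≠ 0 := by omega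
    have e3 : ¬(k ≤ 1) := by omega
    have e5 : (k - 1) / 2 - 1 = vidx k := by
      unfold vidx
      rw [if_neg hpar]
    simp only [XB, VAB, vidx, prevOff, if_neg hk0, if_neg e2, if_neg e1',
      if_pos (by omega : k % 2 = 1), if_neg e3]
    rw [if_neg hpar]
    cases hgv : g ((k - 1) / 2 - 1) <;> simp +decide [e5 ▸ hgv]

lemma sum_bot {g : ℕ → Bool} (hn : 3 ≤ n) (he : n % 2 = 0) {k : ℕ} (hk : k < n) :
    (XB g (prevOff n k) 2).toNat + (XB g k 2).toNat + (VBB g k).toNat = 2 := by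
  rcases eq_or_ne k 0 with rfl | hk0
  · have h1 : n - 1 ≠ 0 := by omega
    have h2 : (n - 1) % 2 = 1 := by omega
    simp [XB, VBB, prevOff, h1, h2]
  rcases eq_or_ne k 1 with rfl | hk1
  · simp [XB, VBB, prevOff]
  by_cases hpar : k % 2 = 0
  · have e1 : k - 1 ≠ 0 := by omega
    have e2 : (k - 1) % 2 = 1 := by omega
    have e3 : ¬(k ≤ 1) := by omega
    have e4 : ¬(k % 2 = 1) := by omega
    simp only [XB, VBB, vidx, prevOff, if_neg hk0, if_neg e1, if_pos e2, if_neg e4,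
      if_pos hpar, if_neg e3]
    cases g (k / 2 - 1) <;> simp
  · have e1' : ¬((k - 1) % 2 = 1) := by omega
    have e2 : k - 1 ≠ 0 := by omega
    have e3 : ¬(k ≤ 1) := by omega
    have e5 : (k - 1) / 2 - 1 = vidx k := by
      unfold vidx
      rw [if_neg hpar]
    simp only [XB, VBB, vidx, prevOff, if_neg hk0, if_neg e2, if_neg e1',
      if_pos (by omega : k % 2 = 1), if_neg e3]
    rw [if_neg hpar]
    cases hgv : g ((k - 1) / 2 - 1) <;> simp +decide [e5 ▸ hgv]

lemma sum_mid {g : ℕ → Bool} (hn : 3 ≤ n) (he : n % 2 = 0) {k : ℕ} (hk : k < n) :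
    (XB g (prevOff n k) 1).toNat + (XB g k 1).toNat + (VAB g k).toNat + (VBB g k).toNat
      = 2 := by
  rcases eq_or_ne k 0 with rfl | hk0
  · have h1 : n - 1 ≠ 0 := by omega
    have h2 : (n - 1) % 2 = 1 := by omega
    simp [XB, VAB, VBB, prevOff, h1, h2]
  rcases eq_or_ne k 1 with rfl | hk1
  · simp [XB, VAB, VBB, prevOff]
  by_cases hpar : k % 2 = 0
  · have e1 : k - 1 ≠ 0 := by omega
    have e2 : (k - 1) % 2 = 1 := by omega
    have e3 : ¬(k ≤ 1) := by omega
    have e4 : ¬(k % 2 = 1) := by omega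
    simp only [XB, VAB, VBB, vidx, prevOff, if_neg hk0, if_neg e1, if_pos e2, if_neg e4,
      if_pos hpar, if_neg e3]
    cases g (k / 2 - 1) <;> simp
  · have e1' : ¬((k - 1) % 2 = 1) := by omega
    have e2 : k - 1 ≠ 0 := by omega
    have e3 : ¬(k ≤ 1) := by omega
    simp only [XB, VAB, VBB, vidx, prevOff, if_neg hk0, if_neg e2, if_neg e1',
      if_pos (by omega : k % 2 = 1), if_neg e3, if_neg hpar]
    cases g ((k - 1) / 2 - 1) <;> simp +decide

lemma ite_toNat (p : Prop) [Decidable p] (b : Bool) (h : p ↔ b = true) :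
    (if p then 1 else 0) = b.toNat := by
  cases b <;> simp [h]

lemma off_lt (j : Fin n) : (j - j0).val < n := (j - j0).isLt

lemma off_pred (hn : 3 ≤ n) (j : Fin n) :
    ((j - 1) - j0).val = prevOff n ((j - j0).val) := by
  have e : (j - 1) - j0 = (j - j0) - 1 := by ring
  rw [e, val_sub_one hn, prevOff]

lemma deg_model (hn : 3 ≤ n) (he : n % 2 = 0) :
    ∀ v, ((model n j0 g).neighborSet v).ncard = 2 := by
  classical
  rintro ⟨i, j⟩
  have hml := model_le (n := n) (j0 := j0) (g := g) hn
  have hprev : ∀ i' : Fin 3, ((model n j0 g).Adj (i', j) (i', j - 1)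
      ↔ XB g (((j - 1) - j0).val) i' = true) := by
    intro i'
    rw [adj_comm, show ((i', j) : Fin 3 × Fin n) = (i', (j - 1) + 1) by rw [sub_add_cancel']]
    exact model_adj_h hn i' (j - 1)
  fin_cases i
  · show ((model n j0 g).neighborSet ((0 : Fin 3), j)).ncard = 2
    rw [ncard_adj3 _ (0, j) (0, j - 1) (0, j + 1) (1, j)
      (by simp [Prod.ext_iff, pred_ne_succ hn j]) (by simp [Prod.ext_iff])
      (by simp [Prod.ext_iff]) (cand_top hn hml j),
      ite_toNat _ _ (hprev 0), ite_toNat _ _ (model_adj_h hn 0 j),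
      ite_toNat _ _ (model_adj_va hn j), off_pred hn]
    exact sum_top hn he (off_lt j)
  · show ((model n j0 g).neighborSet ((1 : Fin 3), j)).ncard = 2
    rw [ncard_adj4 _ (1, j) (1, j - 1) (1, j + 1) (0, j) (2, j)
      (by simp [Prod.ext_iff, pred_ne_succ hn j]) (by simp [Prod.ext_iff])
      (by simp [Prod.ext_iff]) (by simp [Prod.ext_iff]) (by simp [Prod.ext_iff])
      (by simp [Prod.ext_iff, Fin.ext_iff]) (cand_mid hn hml j),
      ite_toNat _ _ (hprev 1), ite_toNat _ _ (model_adj_h hn 1 j),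
      ite_toNat _ _ ((adj_comm _ _ _).trans (model_adj_va hn j)),
      ite_toNat _ _ (model_adj_vb hn j), off_pred hn]
    exact sum_mid hn he (off_lt j)
  · show ((model n j0 g).neighborSet ((2 : Fin 3), j)).ncard = 2
    rw [ncard_adj3 _ (2, j) (2, j - 1) (2, j + 1) (1, j)
      (by simp [Prod.ext_iff, pred_ne_succ hn j]) (by simp [Prod.ext_iff])
      (by simp [Prod.ext_iff]) (cand_bot hn hml j),
      ite_toNat _ _ (hprev 2), ite_toNat _ _ (model_adj_h hn 2 j),
      ite_toNat _ _ ((adj_comm _ _ _).trans (model_adj_vb hn j)), off_pred hn]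
    exact sum_bot hn he (off_lt j)


lemma XB_odd0 {g : ℕ → Bool} {m : ℕ} (hm0 : m ≠ 0) (hp : m % 2 = 1) : XB g m 0 = true := by
  unfold XB
  rw [if_neg hm0, if_pos hp, if_neg (by decide : ¬(0 : Fin 3) = 1)]
lemma XB_odd1 {g : ℕ → Bool} {m : ℕ} (hm0 : m ≠ 0) (hp : m % 2 = 1) : XB g m 1 = false := by
  unfold XB
  rw [if_neg hm0, if_pos hp, if_pos rfl]
lemma XB_odd2 {g : ℕ → Bool} {m : ℕ} (hm0 : m ≠ 0) (hp : m % 2 = 1) : XB g m 2 = true := by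
  unfold XB
  rw [if_neg hm0, if_pos hp, if_neg (by decide : ¬(2 : Fin 3) = 1)]
lemma XB_even0 {g : ℕ → Bool} {m : ℕ} (hm0 : m ≠ 0) (hp : m % 2 = 0) :
    XB g m 0 = g (m / 2 - 1) := by
  unfold XB
  rw [if_neg hm0, if_neg (by omega : ¬(m % 2 = 1)), if_pos rfl]
lemma XB_even1 {g : ℕ → Bool} {m : ℕ} (hm0 : m ≠ 0) (hp : m % 2 = 0) : XB g m 1 = true := by
  unfold XB
  rw [if_neg hm0, if_neg (by omega : ¬(m % 2 = 1)), if_neg (by decide : ¬(1 : Fin 3) = 0),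
    if_pos rfl]
lemma XB_even2 {g : ℕ → Bool} {m : ℕ} (hm0 : m ≠ 0) (hp : m % 2 = 0) :
    XB g m 2 = !g (m / 2 - 1) := by
  unfold XB
  rw [if_neg hm0, if_neg (by omega : ¬(m % 2 = 1)), if_neg (by decide : ¬(2 : Fin 3) = 0),
    if_neg (by decide : ¬(2 : Fin 3) = 1)]
lemma XB_zero {g : ℕ → Bool} (i : Fin 3) : XB g 0 i = false := by simp [XB]
lemma vidx_even {m : ℕ} (hp : m % 2 = 0) : vidx m = m / 2 - 1 := by
  unfold vidx
  rw [if_pos hp]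
lemma VAB_big {g : ℕ → Bool} {m : ℕ} (hm : 2 ≤ m) : VAB g m = !g (vidx m) := by
  unfold VAB
  rw [if_neg (by omega : ¬(m ≤ 1))]
lemma VBB_big {g : ℕ → Bool} {m : ℕ} (hm : 2 ≤ m) : VBB g m = g (vidx m) := by
  unfold VBB
  rw [if_neg (by omega : ¬(m ≤ 1))]
lemma VAB_small {g : ℕ → Bool} {m : ℕ} (hm : m ≤ 1) : VAB g m = true := by simp [VAB, hm]
lemma VBB_small {g : ℕ → Bool} {m : ℕ} (hm : m ≤ 1) : VBB g m = true := by simp [VBB, hm]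

lemma vab_or (g : ℕ → Bool) (m : ℕ) : VAB g m = true ∨ VBB g m = true := by
  by_cases hm : m ≤ 1
  · exact Or.inl (VAB_small hm)
  · rw [VAB_big (by omega), VBB_big (by omega)]
    cases g (vidx m) <;> simp

lemma cross_model (hn : 3 ≤ n) : Even (crossNum 3 n (model n j0 g)) := by
  classical
  rw [crossNum_eq]
  have hiX : ∀ i : Fin 3, iX (model n j0 g) i (-1) = (XB g (((-1 : Fin n) - j0).val) i).toNat := by
    intro i
    unfold iX
    exact ite_toNat _ _ (model_adj_h hn i (-1))
  rw [hiX 0, hiX 1, hiX 2]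
  set m := ((-1 : Fin n) - j0).val with hm
  rcases eq_or_ne m 0 with h | h
  · rw [h]
    simp [XB_zero]
  by_cases hp : m % 2 = 1
  · rw [XB_odd0 h hp, XB_odd1 h hp, XB_odd2 h hp]
    decide
  · rw [XB_even0 h (by omega), XB_even1 h (by omega), XB_even2 h (by omega)]
    cases g (m / 2 - 1) <;> decide

lemma col_repr (j0 j : Fin n) : j0 - (((j0 - j).val : ℕ) : Fin n) = j := by
  rw [Fin.cast_val_eq_self]
  ring

lemma off_neg (hn : 3 ≤ n) (j0 : Fin n) {m : ℕ} (h0 : 0 < m) (h1 : m < n) :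
    ((j0 - ((m : ℕ) : Fin n)) - j0).val = n - m := by
  have e : (j0 - ((m : ℕ) : Fin n)) - j0 = ((n - m : ℕ) : Fin n) := by
    have h2 : ((m : ℕ) : Fin n) + ((n - m : ℕ) : Fin n) = 0 := by
      rw [← Nat.cast_add, show m + (n - m) = n by omega]
      exact Fin.natCast_self n
    have h3 : -((m : ℕ) : Fin n) = ((n - m : ℕ) : Fin n) := neg_eq_of_add_eq_zero_right h2
    rw [← h3]
    ring
  rw [e, fcast_val, Nat.mod_eq_of_lt (by omega)]

lemma reach_col (hn : 3 ≤ n) (j0 : Fin n) (g : ℕ → Bool) :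
    ∀ k : ℕ, k < n → ∀ i : Fin 3,
      (model n j0 g).Reachable (i, j0 - ((k : ℕ) : Fin n)) ((1 : Fin 3), j0) := by
  intro k
  induction k with
  | zero =>
    intro _ i
    have hz : j0 - ((0 : ℕ) : Fin n) = j0 := by simp
    rw [hz]
    have hoff : ((j0 - j0).val) = 0 := by simp
    have hva : (model n j0 g).Adj (0, j0) (1, j0) := by
      rw [model_adj_va hn, hoff]
      exact VAB_small (by omega)
    have hvb : (model n j0 g).Adj (1, j0) (2, j0) := by
      rw [model_adj_vb hn, hoff]
      exact VBB_small (by omega)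
    fin_cases i
    · exact hva.reachable
    · exact Reachable.refl _
    · exact hvb.symm.reachable
  | succ k ih =>
    intro hk1 i
    have hkn : k < n := by omega
    set c : Fin n := j0 - (((k + 1 : ℕ)) : Fin n) with hc
    have hc1 : c + 1 = j0 - ((k : ℕ) : Fin n) := by
      rw [hc]
      push_cast
      ring
    have hoff : (c - j0).val = n - (k + 1) := off_neg hn j0 (by omega) hk1
    set m : ℕ := n - (k + 1) with hmdef
    have hm0 : m ≠ 0 := by omega
    have hcross : ∀ i' : Fin 3, XB g m i' = true →
        (model n j0 g).Reachable (i', c) ((1 : Fin 3), j0) := by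
      intro i' hx
      have hadj : (model n j0 g).Adj (i', c) (i', c + 1) := by
        rw [model_adj_h hn, hoff]
        exact hx
      exact (hadj.reachable).trans (by rw [hc1]; exact ih hkn i')
    have hva : VAB g m = true → (model n j0 g).Adj (0, c) (1, c) := by
      intro h
      rw [model_adj_va hn, hoff]
      exact h
    have hvb : VBB g m = true → (model n j0 g).Adj (1, c) (2, c) := by
      intro h
      rw [model_adj_vb hn, hoff]
      exact h
    by_cases hp : m % 2 = 1
    · have r0 := hcross 0 (XB_odd0 hm0 hp)
      have r2 := hcross 2 (XB_odd2 hm0 hp)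
      fin_cases i
      · exact r0
      · rcases vab_or g m with h | h
        · exact ((hva h).symm.reachable).trans r0
        · exact ((hvb h).reachable).trans r2
      · exact r2
    · have hpe : m % 2 = 0 := by omega
      have r1 := hcross 1 (XB_even1 hm0 hpe)
      fin_cases i
      · cases hg : g (m / 2 - 1) with
        | true => exact hcross 0 (by rw [XB_even0 hm0 hpe, hg])
        | false =>
          have h : VAB g m = true := by
            by_cases hm2 : m ≤ 1
            · exact VAB_small hm2
            · rw [VAB_big (by omega), vidx_even hpe, hg]
              rfl
          exact ((hva h).reachable).trans r1
      · exact r1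
      · cases hg : g (m / 2 - 1) with
        | true =>
          have h : VBB g m = true := by
            by_cases hm2 : m ≤ 1
            · exact VBB_small hm2
            · rw [VBB_big (by omega), vidx_even hpe, hg]
          exact ((hvb h).symm.reachable).trans r1
        | false => exact hcross 2 (by rw [XB_even2 hm0 hpe, hg]; rfl)

lemma conn_model (hn : 3 ≤ n) : (model n j0 g).Connected := by
  rw [connected_iff]
  constructor
  · rintro ⟨i, j⟩ ⟨i', j'⟩
    have h1 := reach_col hn j0 g ((j0 - j).val) (j0 - j).isLt i
    have h2 := reach_col hn j0 g ((j0 - j').val) (j0 - j').isLt i'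
    rw [col_repr] at h1 h2
    exact h1.trans h2.symm
  · exact ⟨((1 : Fin 3), j0)⟩


lemma adj_le_of_masks (hn : 3 ≤ n) {G1 G2 : SimpleGraph (Fin 3 × Fin n)}
    (h1 : G1 ≤ cylGraph 3 n)
    (hh : ∀ (i : Fin 3) (j : Fin n), G1.Adj (i, j) (i, j + 1) → G2.Adj (i, j) (i, j + 1))
    (hva : ∀ j, G1.Adj (0, j) (1, j) → G2.Adj (0, j) (1, j))
    (hvb : ∀ j, G1.Adj (1, j) (2, j) → G2.Adj (1, j) (2, j)) : G1 ≤ G2 := by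
  rintro ⟨ui, uj⟩ ⟨vi, vj⟩ hadj
  rcases edge_shape hn h1 hadj with ⟨hc, hr⟩ | ⟨hr, hc | hc⟩
  · simp only at hc
    subst hc
    rcases hr with ⟨ha, hb⟩ | ⟨ha, hb⟩ | ⟨ha, hb⟩ | ⟨ha, hb⟩ <;> simp only at ha hb <;>
      subst ha <;> subst hb
    · exact hva _ hadj
    · exact (hva _ hadj.symm).symm
    · exact hvb _ hadj
    · exact (hvb _ hadj.symm).symm
  · simp only at hr hc
    subst hr
    subst hc
    exact hh _ _ hadj
  · simp only at hr hc
    subst hr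
    subst hc
    exact (hh _ _ hadj.symm).symm

lemma graph_eq_of_masks (hn : 3 ≤ n) {G1 G2 : SimpleGraph (Fin 3 × Fin n)}
    (h1 : G1 ≤ cylGraph 3 n) (h2 : G2 ≤ cylGraph 3 n)
    (hh : ∀ (i : Fin 3) (j : Fin n), G1.Adj (i, j) (i, j + 1) ↔ G2.Adj (i, j) (i, j + 1))
    (hva : ∀ j, G1.Adj (0, j) (1, j) ↔ G2.Adj (0, j) (1, j))
    (hvb : ∀ j, G1.Adj (1, j) (2, j) ↔ G2.Adj (1, j) (2, j)) : G1 = G2 :=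
  le_antisymm
    (adj_le_of_masks hn h1 (fun i j => (hh i j).1) (fun j => (hva j).1) (fun j => (hvb j).1))
    (adj_le_of_masks hn h2 (fun i j => (hh i j).2) (fun j => (hva j).2) (fun j => (hvb j).2))

open Classical in
theorem forward_struct (hn : 3 ≤ n) (he : n % 2 = 0)
    (hle : H ≤ cylGraph 3 n) (hconn : H.Connected)
    (hdeg : ∀ v, (H.neighborSet v).ncard = 2) (hcontr : Even (crossNum 3 n H)) :
    ∃ (j0 : Fin n) (g : ℕ → Bool), H = model n j0 g := by
  have heven : Even n := by rw [Nat.even_iff]; exact he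
  obtain ⟨j0, hz⟩ := zero_exists hn hle hdeg heven hcontr hconn
  set g0 : ℕ → Bool := fun t => decide (iX H 0 (j0 + ((2 * (t + 1) : ℕ) : Fin n)) = 1)
    with hg0
  refine ⟨j0, g0, ?_⟩
  set o : Fin n → ℕ := fun j => (j - j0).val with ho
  have oj_col : ∀ j, j0 + ((o j : ℕ) : Fin n) = j := by
    intro j
    rw [ho]
    simp only
    rw [Fin.cast_val_eq_self]
    ring
  have o_lt : ∀ j, o j < n := fun j => (j - j0).isLt
  have o_zero : ∀ j, o j = 0 → j = j0 := by
    intro j h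
    have h2 := oj_col j
    rw [h] at h2
    simpa using h2.symm
  have o_j0 : o j0 = 0 := by simp [ho]
  have s0 : sC H j0 = 0 := by
    have h0 := hz 0
    have h1 := hz 1
    have h2 := hz 2
    unfold sC
    omega
  have s_at : ∀ j, sC H j = if (o j) % 2 = 0 then 0 else 2 := by
    intro j
    have h := s_offset hn hle hdeg j0 (o j)
    rw [oj_col j, s0] at h
    split at h <;> split <;> omega
  have modd : ∀ j, (o j) % 2 = 1 → iX H 0 j = 1 ∧ iX H 1 j = 0 ∧ iX H 2 j = 1 := by
    intro j hpar
    refine mask2 hn hle hdeg ?_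
    rw [s_at j, if_neg (by omega)]
  have meven : ∀ j, (o j) % 2 = 0 → j ≠ j0 →
      iX H 1 j = 1 ∧ iX H 2 j = 1 - iX H 0 j ∧ iX H 0 j ≤ 1 := by
    intro j hpar hne
    have h := mask0 hn hle hdeg (by rw [s_at j, if_pos hpar])
    rcases h with ⟨a, b, c⟩ | ⟨a, b, c⟩ | ⟨a, b, c⟩
    · exact absurd (zero_unique hn hle hdeg hconn (allz a b c) hz) hne
    · exact ⟨b, by omega, by omega⟩
    · exact ⟨b, by omega, by omega⟩
  have g0_val : ∀ j, (o j) % 2 = 0 → j ≠ j0 → g0 ((o j) / 2 - 1) = decide (iX H 0 j = 1) := by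
    intro j hpar hne
    have hk0 : o j ≠ 0 := fun h => hne (o_zero j h)
    have e : 2 * (((o j) / 2 - 1) + 1) = o j := by omega
    rw [hg0]
    simp only
    rw [e, oj_col j]
  have hh : ∀ (i : Fin 3) (j : Fin n), H.Adj (i, j) (i, j + 1)
      ↔ (model n j0 g0).Adj (i, j) (i, j + 1) := by
    intro i j
    rw [model_adj_h hn, ← iX_eq_one, show ((j - j0).val) = o j from rfl]
    rcases eq_or_ne (o j) 0 with h0 | h0
    · have hj : j = j0 := o_zero j h0
      rw [h0, XB_zero]
      subst hj
      exact iff_of_false (by rw [hz i]; omega) (by simp)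
    by_cases hpar : (o j) % 2 = 1
    · obtain ⟨m0, m1, m2⟩ := modd j hpar
      fin_cases i
      · show iX H 0 j = 1 ↔ XB g0 (o j) 0 = true
        rw [XB_odd0 h0 hpar]
        exact iff_of_true m0 rfl
      · show iX H 1 j = 1 ↔ XB g0 (o j) 1 = true
        rw [XB_odd1 h0 hpar]
        exact iff_of_false (by omega) (by simp)
      · show iX H 2 j = 1 ↔ XB g0 (o j) 2 = true
        rw [XB_odd2 h0 hpar]
        exact iff_of_true m2 rfl
    · have hpe : (o j) % 2 = 0 := by omega
      have hne : j ≠ j0 := fun h => by rw [h, o_j0] at h0; exact h0 rfl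
      obtain ⟨m1, m2, m0b⟩ := meven j hpe hne
      have hg := g0_val j hpe hne
      fin_cases i
      · show iX H 0 j = 1 ↔ XB g0 (o j) 0 = true
        rw [XB_even0 h0 hpe, hg]
        simp
      · show iX H 1 j = 1 ↔ XB g0 (o j) 1 = true
        rw [XB_even1 h0 hpe]
        exact iff_of_true m1 rfl
      · show iX H 2 j = 1 ↔ XB g0 (o j) 2 = true
        rw [XB_even2 h0 hpe, hg]
        rcases (by omega : iX H 0 j = 0 ∨ iX H 0 j = 1) with h | h
        · rw [h]
          exact iff_of_true (by omega) (by simp)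
        · rw [h]
          exact iff_of_false (by omega) (by simp)
  have x0val : ∀ j, iX H 0 j = (XB g0 (o j) 0).toNat := by
    intro j
    have h2 := hh 0 j
    rw [model_adj_h hn, show ((j - j0).val) = o j from rfl, ← iX_eq_one] at h2
    have hb := iX_le (H := H) 0 j
    cases hxb : XB g0 (o j) 0 <;> rw [hxb] at h2 <;> simp at h2 ⊢ <;> omega
  have x2val : ∀ j, iX H 2 j = (XB g0 (o j) 2).toNat := by
    intro j
    have h2 := hh 2 j
    rw [model_adj_h hn, show ((j - j0).val) = o j from rfl, ← iX_eq_one] at h2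
    have hb := iX_le (H := H) 2 j
    cases hxb : XB g0 (o j) 2 <;> rw [hxb] at h2 <;> simp at h2 ⊢ <;> omega
  have hva : ∀ j, H.Adj (0, j) (1, j) ↔ (model n j0 g0).Adj (0, j) (1, j) := by
    intro j
    rw [model_adj_va hn, ← iA_eq_one, show ((j - j0).val) = o j from rfl]
    have hT := eqTop hn hle hdeg j
    have hx1 := x0val (j - 1)
    have hx2 := x0val j
    have hpv : o (j - 1) = if o j = 0 then n - 1 else o j - 1 := off_pred hn j
    have hb := iA_le (H := H) j
    rcases eq_or_ne (o j) 0 with h0 | h0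
    · rw [if_pos h0] at hpv
      rw [hpv, XB_odd0 (by omega) (by omega)] at hx1
      rw [h0, XB_zero] at hx2
      rw [h0, VAB_small (by omega)]
      simp only [Bool.toNat_true, Bool.toNat_false] at hx1 hx2
      exact iff_of_true (by omega) rfl
    rcases eq_or_ne (o j) 1 with h1 | h1
    · rw [if_neg h0, h1] at hpv
      norm_num at hpv
      rw [hpv, XB_zero] at hx1
      rw [h1, XB_odd0 (by omega) (by omega)] at hx2
      rw [h1, VAB_small (by omega)]
      simp only [Bool.toNat_true, Bool.toNat_false] at hx1 hx2
      exact iff_of_true (by omega) rfl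
    have h2 : 2 ≤ o j := by omega
    rw [VAB_big h2]
    rw [if_neg h0] at hpv
    by_cases hpar : (o j) % 2 = 0
    · rw [hpv, XB_odd0 (by omega) (by omega)] at hx1
      rw [XB_even0 h0 hpar] at hx2
      rw [vidx_even hpar]
      cases hgv : g0 (o j / 2 - 1)
      · rw [hgv] at hx2
        simp only [Bool.toNat_true, Bool.toNat_false, Bool.not_false] at hx1 hx2
        exact iff_of_true (by omega) rfl
      · rw [hgv] at hx2
        simp only [Bool.toNat_true, Bool.toNat_false, Bool.not_true] at hx1 hx2
        exact iff_of_false (by omega) (by simp)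
    · have hpe : (o j - 1) % 2 = 0 := by omega
      rw [hpv, XB_even0 (by omega) hpe] at hx1
      rw [XB_odd0 h0 (by omega)] at hx2
      have hv : vidx (o j) = (o j - 1) / 2 - 1 := by
        unfold vidx
        rw [if_neg hpar]
      rw [hv]
      cases hgv : g0 ((o j - 1) / 2 - 1)
      · rw [hgv] at hx1
        simp only [Bool.toNat_true, Bool.toNat_false, Bool.not_false] at hx1 hx2
        exact iff_of_true (by omega) rfl
      · rw [hgv] at hx1
        simp only [Bool.toNat_true, Bool.toNat_false, Bool.not_true] at hx1 hx2
        exact iff_of_false (by omega) (by simp)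
  have hvb : ∀ j, H.Adj (1, j) (2, j) ↔ (model n j0 g0).Adj (1, j) (2, j) := by
    intro j
    rw [model_adj_vb hn, ← iB_eq_one, show ((j - j0).val) = o j from rfl]
    have hT := eqBot hn hle hdeg j
    have hx1 := x2val (j - 1)
    have hx2 := x2val j
    have hpv : o (j - 1) = if o j = 0 then n - 1 else o j - 1 := off_pred hn j
    have hb := iB_le (H := H) j
    rcases eq_or_ne (o j) 0 with h0 | h0
    · rw [if_pos h0] at hpv
      rw [hpv, XB_odd2 (by omega) (by omega)] at hx1
      rw [h0, XB_zero] at hx2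
      rw [h0, VBB_small (by omega)]
      simp only [Bool.toNat_true, Bool.toNat_false] at hx1 hx2
      exact iff_of_true (by omega) rfl
    rcases eq_or_ne (o j) 1 with h1 | h1
    · rw [if_neg h0, h1] at hpv
      norm_num at hpv
      rw [hpv, XB_zero] at hx1
      rw [h1, XB_odd2 (by omega) (by omega)] at hx2
      rw [h1, VBB_small (by omega)]
      simp only [Bool.toNat_true, Bool.toNat_false] at hx1 hx2
      exact iff_of_true (by omega) rfl
    have h2 : 2 ≤ o j := by omega
    rw [VBB_big h2]
    rw [if_neg h0] at hpv
    by_cases hpar : (o j) % 2 = 0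
    · rw [hpv, XB_odd2 (by omega) (by omega)] at hx1
      rw [XB_even2 h0 hpar] at hx2
      rw [vidx_even hpar]
      cases hgv : g0 (o j / 2 - 1)
      · rw [hgv] at hx2
        simp only [Bool.toNat_true, Bool.toNat_false, Bool.not_false] at hx1 hx2
        exact iff_of_false (by omega) (by simp)
      · rw [hgv] at hx2
        simp only [Bool.toNat_true, Bool.toNat_false, Bool.not_true] at hx1 hx2
        exact iff_of_true (by omega) rfl
    · have hpe : (o j - 1) % 2 = 0 := by omega
      rw [hpv, XB_even2 (by omega) hpe] at hx1
      rw [XB_odd2 h0 (by omega)] at hx2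
      have hv : vidx (o j) = (o j - 1) / 2 - 1 := by
        unfold vidx
        rw [if_neg hpar]
      rw [hv]
      cases hgv : g0 ((o j - 1) / 2 - 1)
      · rw [hgv] at hx1
        simp only [Bool.toNat_true, Bool.toNat_false, Bool.not_false] at hx1 hx2
        exact iff_of_false (by omega) (by simp)
      · rw [hgv] at hx1
        simp only [Bool.toNat_true, Bool.toNat_false, Bool.not_true] at hx1 hx2
        exact iff_of_true (by omega) rfl
  exact graph_eq_of_masks hn hle (model_le hn) hh hva hvb


lemma o_of_col (hn : 3 ≤ n) (j0 : Fin n) {k : ℕ} (hk : k < n) :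
    ((j0 + ((k : ℕ) : Fin n)) - j0).val = k := by
  rw [add_sub_cancel_left, fcast_val, Nat.mod_eq_of_lt hk]

lemma model_congr (hn : 3 ≤ n) (he : n % 2 = 0) {j0 : Fin n} {g g' : ℕ → Bool}
    (hgg : ∀ t, t < n / 2 - 1 → g t = g' t) : model n j0 g = model n j0 g' := by
  have hXB : ∀ k, k < n → ∀ i, XB g k i = XB g' k i := by
    intro k hk i
    unfold XB
    rcases eq_or_ne k 0 with rfl | hk0
    · simp
    by_cases hp : k % 2 = 1
    · rw [if_neg hk0, if_neg hk0, if_pos hp, if_pos hp]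
    · rw [if_neg hk0, if_neg hk0, if_neg hp, if_neg hp, hgg (k / 2 - 1) (by omega)]
  have hVA : ∀ k, k < n → VAB g k = VAB g' k := by
    intro k hk
    unfold VAB vidx
    by_cases h1 : k ≤ 1
    · rw [if_pos h1, if_pos h1]
    · rw [if_neg h1, if_neg h1]
      by_cases hp : k % 2 = 0
      · rw [if_pos hp, hgg (k / 2 - 1) (by omega)]
      · rw [if_neg hp, hgg ((k - 1) / 2 - 1) (by omega)]
  have hVB : ∀ k, k < n → VBB g k = VBB g' k := by
    intro k hk
    unfold VBB vidx
    by_cases h1 : k ≤ 1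
    · rw [if_pos h1, if_pos h1]
    · rw [if_neg h1, if_neg h1]
      by_cases hp : k % 2 = 0
      · rw [if_pos hp, hgg (k / 2 - 1) (by omega)]
      · rw [if_neg hp, hgg ((k - 1) / 2 - 1) (by omega)]
  refine graph_eq_of_masks hn (model_le hn) (model_le hn) (fun i j => ?_) (fun j => ?_)
    (fun j => ?_)
  · rw [model_adj_h hn, model_adj_h hn, hXB _ (j - j0).isLt]
  · rw [model_adj_va hn, model_adj_va hn, hVA _ (j - j0).isLt]
  · rw [model_adj_vb hn, model_adj_vb hn, hVB _ (j - j0).isLt]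

lemma model_zero_col (hn : 3 ≤ n) {j0 : Fin n} {g : ℕ → Bool} (j : Fin n) :
    (∀ i : Fin 3, ¬ (model n j0 g).Adj (i, j) (i, j + 1)) ↔ j = j0 := by
  constructor
  · intro h
    by_contra hne
    have hne0 : (j - j0).val ≠ 0 := by
      intro h0
      apply hne
      have h1 : j - j0 = 0 := Fin.ext (by simpa using h0)
      exact (sub_eq_zero.1 h1)
    by_cases hp : (j - j0).val % 2 = 1
    · exact h 0 ((model_adj_h hn 0 j).2 (XB_odd0 hne0 hp))
    · exact h 1 ((model_adj_h hn 1 j).2 (XB_even1 hne0 (by omega)))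
  · rintro rfl
    intro i hadj
    rw [model_adj_h hn] at hadj
    have hz : ((j - j : Fin n)).val = 0 := by simp
    rw [hz, XB_zero] at hadj
    exact absurd hadj (by simp)

lemma model_inj (hn : 3 ≤ n) (he : n % 2 = 0) {j0 j0' : Fin n} {g g' : ℕ → Bool}
    (h : model n j0 g = model n j0' g') :
    j0 = j0' ∧ ∀ t, t < n / 2 - 1 → g t = g' t := by
  have hj : j0 = j0' := by
    have h1 := (model_zero_col hn (j0 := j0') (g := g') j0').2 rfl
    rw [← h] at h1
    exact ((model_zero_col hn j0').1 h1).symm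
  subst hj
  refine ⟨rfl, fun t ht => ?_⟩
  set k : ℕ := 2 * (t + 1) with hk
  have hkn : k < n := by omega
  have hk0 : k ≠ 0 := by omega
  have hke : k % 2 = 0 := by omega
  have hkt : k / 2 - 1 = t := by omega
  set j : Fin n := j0 + ((k : ℕ) : Fin n) with hj
  have hoj : (j - j0).val = k := o_of_col hn j0 hkn
  have h1 : (model n j0 g).Adj (0, j) (0, j + 1) ↔ g t = true := by
    rw [model_adj_h hn, hoj, XB_even0 hk0 hke, hkt]
  have h2 : (model n j0 g').Adj (0, j) (0, j + 1) ↔ g' t = true := by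
    rw [model_adj_h hn, hoj, XB_even0 hk0 hke, hkt]
  rw [h] at h1
  have h3 : g t = true ↔ g' t = true := h1.symm.trans h2
  cases hgt : g t <;> cases hgt' : g' t <;> rw [hgt, hgt'] at h3 <;> simp_all

def trunc (n : ℕ) (G : Fin (n / 2 - 1) → Bool) : ℕ → Bool :=
  fun t => if h : t < n / 2 - 1 then G ⟨t, h⟩ else false

lemma count_even (hn : 3 ≤ n) (he : n % 2 = 0) :
    Nat.card {H : SimpleGraph (Fin 3 × Fin n) //
        IsHamCycleSub (cylGraph 3 n) H ∧ IsContractible 3 n H}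
      = n * 2 ^ (n / 2 - 1) := by
  have hbij : Function.Bijective
      (fun p : Fin n × (Fin (n / 2 - 1) → Bool) =>
        (⟨model n p.1 (trunc n p.2),
          ⟨⟨model_le hn, conn_model hn, deg_model hn he⟩, cross_model hn⟩⟩ :
          {H : SimpleGraph (Fin 3 × Fin n) //
            IsHamCycleSub (cylGraph 3 n) H ∧ IsContractible 3 n H})) := by
    constructor
    · rintro ⟨j0, G⟩ ⟨j0', G'⟩ hpq
      simp only [Subtype.mk_eq_mk] at hpq
      obtain ⟨hj, hg⟩ := model_inj hn he hpq
      refine Prod.ext hj (funext fun t => ?_)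
      have := hg t.val t.isLt
      unfold trunc at this
      rw [dif_pos t.isLt, dif_pos t.isLt] at this
      simpa using this
    · rintro ⟨H, ⟨⟨hle, hconn, hdeg⟩, hcontr⟩⟩
      obtain ⟨j0, g, hHg⟩ := forward_struct hn he hle hconn hdeg hcontr
      refine ⟨⟨j0, fun t => g t.val⟩, ?_⟩
      refine Subtype.ext ?_
      simp only
      rw [hHg]
      refine (model_congr hn he fun t ht => ?_).symm
      unfold trunc
      rw [dif_pos ht]
  rw [← Nat.card_eq_of_bijective _ hbij]
  simp [Nat.card_eq_fintype_card]

lemma count_odd (hn : 3 ≤ n) (ho : ¬ Even n) :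
    Nat.card {H : SimpleGraph (Fin 3 × Fin n) //
        IsHamCycleSub (cylGraph 3 n) H ∧ IsContractible 3 n H} = 0 := by
  have : IsEmpty {H : SimpleGraph (Fin 3 × Fin n) //
      IsHamCycleSub (cylGraph 3 n) H ∧ IsContractible 3 n H} := by
    refine ⟨?_⟩
    rintro ⟨H, ⟨⟨hle, hconn, hdeg⟩, hcontr⟩⟩
    exact odd_case hn hle hdeg ho hcontr
  exact Nat.card_of_isEmpty

end CHC

/-- Window `(i, j)` (a square face of `P_{m+1} × C_n`, with corners in rows
`i, i+1` and columns `j, j+1`) lies in the interior of the contractible cycle `H`: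
the upward ray from the window crosses an odd number of edges of `H`. -/
def interiorWin (m n : ℕ) [NeZero n] (H : SimpleGraph (Fin (m + 1) × Fin n))
    (w : Fin m × Fin n) : Prop :=
  Odd (Set.ncard {r : Fin (m + 1) | (r : ℕ) ≤ (w.1 : ℕ) ∧ H.Adj (r, w.2) (r, w.2 + 1)})

/-- The split tree of the contractible Hamiltonian cycle `H` has the window
`w_{1,1}` as its up root: the window `(0,0)` is exterior and is connected,
within the graph induced on exterior windows, to an exterior window in the last row. -/
def UpRootAtOrigin (m n : ℕ) [NeZero m] [NeZero n]
    (H : SimpleGraph (Fin (m + 1) × Fin n)) : Prop :=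
  ∃ (h0 : ((0, 0) : Fin m × Fin n) ∈ {w : Fin m × Fin n | ¬ interiorWin m n H w})
    (w : Fin m × Fin n) (hw : w ∈ {w : Fin m × Fin n | ¬ interiorWin m n H w}),
    (w.1 : ℕ) = m - 1 ∧
    ((cylGraph m n).induce {w : Fin m × Fin n | ¬ interiorWin m n H w}).Reachable
      ⟨(0, 0), h0⟩ ⟨w, hw⟩

/-- The number of contractible Hamiltonian cycles of `P_3 × C_n` is
`h_2^c(n) = (n/4)·(√2)^n·(1+(−1)^n)`, i.e. `n·2^{n/2−1}` for even `n` and `0`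
for odd `n`. -/
theorem contractible_ham_cycles_P3 (n : ℕ) [NeZero n] (hn : 3 ≤ n) :
    ((Nat.card {H : SimpleGraph (Fin 3 × Fin n) //
        IsHamCycleSub (cylGraph 3 n) H ∧ IsContractible 3 n H} : ℝ)
      = (n : ℝ) / 4 * (Real.sqrt 2) ^ n * (1 + (-1) ^ n)) ∧
    Nat.card {H : SimpleGraph (Fin 3 × Fin n) //
        IsHamCycleSub (cylGraph 3 n) H ∧ IsContractible 3 n H}
      = if Even n then n * 2 ^ (n / 2 - 1) else 0 := by
  by_cases he : Even n
  · have hcard := CHC.count_even hn (Nat.even_iff.1 he)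
    obtain ⟨m, hm⟩ := he
    have heven : Even n := ⟨m, hm⟩
    have hm2 : 2 ≤ m := by omega
    have hnd : n / 2 = m := by omega
    constructor
    · rw [hcard, hnd]
      have hs : Real.sqrt 2 ^ n = 2 ^ m := by
        rw [hm, show m + m = 2 * m by ring, pow_mul, Real.sq_sqrt (by norm_num : (0:ℝ) ≤ 2)]
      rw [hs, Even.neg_one_pow heven]
      have hpow : (2 : ℝ) ^ m = 2 ^ (m - 1) * 2 := by
        rw [← pow_succ]
        congr 1
        omega
      rw [hpow]
      push_cast
      ring
    · rw [hcard, if_pos heven, hnd]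
  · have hcard := CHC.count_odd hn he
    constructor
    · rw [hcard]
      rw [Odd.neg_one_pow (Nat.not_even_iff_odd.1 he)]
      norm_num
    · rw [hcard, if_neg he]
end

section
/- In the graph W_{m,n} ≅ P_m × C_n (windows lattice of P_{m+1} × C_n), for any subtree T that induces a tree such that the boundary conditions FL and AC of Lemma on A^{c,Int} hold, the set of edges of P_{m+1}×C_n separating T-windows from non-T-windows, together with appropriate boundary edges, forms a 2-regular spanning subgraph of P_{m+1} × C_n. -/
open SimpleGraph

/-- Extend a window labeling `a : Fin m → Fin n → Bool` to all natural row indices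
(`false` outside the range). -/
def extLab (m n : ℕ) (a : Fin m → Fin n → Bool) (i : ℕ) (j : Fin n) : Bool :=
  if h : i < m then a ⟨i, h⟩ j else false

/-- The horizontal edge in row `i` (0 ≤ i ≤ m), between columns `j` and `j+1`, is kept:
it is a boundary edge adjacent to a window labeled 1, or it separates a window labeled 1
from a window labeled 0. -/
def hKeep (m n : ℕ) (a : Fin m → Fin n → Bool) (i : ℕ) (j : Fin n) : Prop :=
  if i = 0 then extLab m n a 0 j = true
  else if i = m then extLab m n a (m - 1) j = true
  else extLab m n a (i - 1) j ≠ extLab m n a i j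

/-- The vertical edge between rows `i` and `i+1` at column `j` is kept: it separates
the windows in window-row `i` and window-columns `j-1`, `j`, which carry different labels. -/
def vKeep (m n : ℕ) [NeZero n] (a : Fin m → Fin n → Bool) (i : ℕ) (j : Fin n) : Prop :=
  extLab m n a i (j - 1) ≠ extLab m n a i j

/-- The spanning subgraph of `P_{m+1} × C_n` consisting of the edges separating
windows labeled 1 from windows labeled 0, together with the boundary edges adjacent
to windows labeled 1. -/
def sepGraph (m n : ℕ) [NeZero n] (a : Fin m → Fin n → Bool) :
    SimpleGraph (Fin (m + 1) × Fin n) :=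
  SimpleGraph.fromRel fun u v =>
    (u.1 = v.1 ∧ v.2 = u.2 + 1 ∧ hKeep m n a (u.1 : ℕ) u.2) ∨
    (u.2 = v.2 ∧ (v.1 : ℕ) = (u.1 : ℕ) + 1 ∧ vKeep m n a (u.1 : ℕ) u.2)

/-- Condition FL^{c,Int}: `a_{1,1} = 0`, and no two cyclically consecutive `0`s
in the first row nor in the last row. -/
def FLcond (m n : ℕ) [NeZero n] (a : Fin m → Fin n → Bool) : Prop :=
  extLab m n a 0 0 = false ∧
  (∀ j : Fin n, ¬(extLab m n a 0 j = false ∧ extLab m n a 0 (j + 1) = false)) ∧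
  (∀ j : Fin n, ¬(extLab m n a (m - 1) j = false ∧ extLab m n a (m - 1) (j + 1) = false))

/-- Condition AC^{c,Int}: no 2×2 block of windows has labels
`(1,1,1,1)`, `(0,0,0,0)`, `(0,1,1,0)` or `(1,0,0,1)` (equivalently, no 2×2 block with
equal diagonal and equal antidiagonal). -/
def ACcond (m n : ℕ) [NeZero n] (a : Fin m → Fin n → Bool) : Prop :=
  ∀ i : ℕ, i + 1 < m → ∀ j : Fin n,
    ¬(extLab m n a i j = extLab m n a (i + 1) (j + 1) ∧
      extLab m n a (i + 1) j = extLab m n a i (j + 1))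

/-- Condition TC^{c,Int}: the windows labeled 1 induce a tree in the window
lattice `W_{m,n} ≅ P_m × C_n`. -/
def TCcond (m n : ℕ) (a : Fin m → Fin n → Bool) : Prop :=
  ((cylGraph m n).induce {w : Fin m × Fin n | a w.1 w.2 = true}).IsTree

namespace SepAux

lemma fin_one_ne_zero {n : ℕ} [NeZero n] (hn : 3 ≤ n) : (1 : Fin n) ≠ 0 := by
  intro h
  have h1 : ((1 : Fin n) : ℕ) = 1 % n := Fin.val_one' n
  rw [h] at h1
  simp at h1
  omega

lemma fin_add_one_ne {n : ℕ} [NeZero n] (hn : 3 ≤ n) (j : Fin n) : j + 1 ≠ j := by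
  intro h
  have : (1 : Fin n) = 0 := by
    have := congrArg (fun x => x - j) h
    simpa [add_comm, add_sub_cancel_right, sub_self] using this
  exact fin_one_ne_zero hn this

lemma fin_sub_one_ne {n : ℕ} [NeZero n] (hn : 3 ≤ n) (j : Fin n) : j - 1 ≠ j := by
  intro h
  have : (1 : Fin n) = 0 := by
    have := congrArg (fun x => j - x) h
    simpa [sub_sub_cancel, sub_self] using this
  exact fin_one_ne_zero hn this

lemma fin_add_ne_sub {n : ℕ} [NeZero n] (hn : 3 ≤ n) (j : Fin n) : j + 1 ≠ j - 1 := by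
  intro h
  have h2 : (1 : Fin n) + 1 = 0 := by
    have h3 : (j + 1) - (j - 1) = (1 : Fin n) + 1 := by abel
    rw [h, sub_self] at h3
    exact h3.symm
  have hv : ((1 : Fin n) : ℕ) = 1 := by
    rw [Fin.val_one']
    exact Nat.mod_eq_of_lt (by omega)
  have h4 := congrArg Fin.val h2
  rw [Fin.val_add, hv, Fin.val_zero, Nat.mod_eq_of_lt (by omega : 1 + 1 < n)] at h4
  exact absurd h4 (by omega)

lemma extLab_of_ge (m n : ℕ) (a : Fin m → Fin n → Bool) {i : ℕ} (h : m ≤ i) (j : Fin n) :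
    extLab m n a i j = false := dif_neg (by omega)

lemma lt_of_extLab_true {m n : ℕ} {a : Fin m → Fin n → Bool} {i : ℕ} {j : Fin n}
    (h : extLab m n a i j = true) : i < m := by
  by_contra hc
  rw [extLab_of_ge m n a (by omega) j] at h
  exact Bool.false_ne_true h

/-- Label of the window just above the horizontal edge in vertex-row `i`
(`false` for the outside region above row `0`). -/
def Nlab (m n : ℕ) (a : Fin m → Fin n → Bool) (i : ℕ) (j : Fin n) : Bool :=
  if i = 0 then false else extLab m n a (i - 1) j

lemma one_le_of_Nlab_true {m n : ℕ} {a : Fin m → Fin n → Bool} {i : ℕ} {j : Fin n}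
    (h : Nlab m n a i j = true) : 1 ≤ i := by
  by_contra hc
  have : i = 0 := by omega
  rw [Nlab, if_pos this] at h
  exact Bool.false_ne_true h

lemma hKeep_iff (m n : ℕ) (a : Fin m → Fin n → Bool) (hm : 1 ≤ m) {i : ℕ} (hi : i ≤ m)
    (j : Fin n) : hKeep m n a i j ↔ Nlab m n a i j ≠ extLab m n a i j := by
  unfold hKeep Nlab
  rcases eq_or_ne i 0 with h0 | h0
  · subst h0
    rw [if_pos rfl, if_pos rfl]
    cases extLab m n a 0 j <;> simp
  · rw [if_neg h0, if_neg h0]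
    rcases eq_or_ne i m with hm' | hm'
    · rw [if_pos hm', hm', extLab_of_ge m n a le_rfl j]
      cases extLab m n a (m - 1) j <;> simp
    · rw [if_neg hm']

lemma block (m n : ℕ) [NeZero n] {a : Fin m → Fin n → Bool} (hm : 1 ≤ m)
    (hFL : FLcond m n a) (hAC : ACcond m n a) {i : ℕ} (hi : i ≤ m) (j : Fin n) :
    ¬(Nlab m n a i (j - 1) = extLab m n a i j ∧
      extLab m n a i (j - 1) = Nlab m n a i j) := by
  rcases eq_or_ne i 0 with h0 | h0
  · subst h0
    rintro ⟨h1, h2⟩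
    simp only [Nlab, if_pos rfl] at h1 h2
    have hcon := hFL.2.1 (j - 1)
    rw [sub_add_cancel] at hcon
    exact hcon ⟨h2, h1.symm⟩
  · rcases eq_or_ne i m with hm' | hm'
    · rintro ⟨h1, h2⟩
      simp only [Nlab, if_neg h0] at h1 h2
      rw [hm'] at h1 h2
      rw [extLab_of_ge m n a le_rfl] at h1 h2
      have hcon := hFL.2.2 (j - 1)
      rw [sub_add_cancel] at hcon
      exact hcon ⟨h1, h2.symm⟩
    · rintro ⟨h1, h2⟩
      simp only [Nlab, if_neg h0] at h1 h2
      have hAC' := hAC (i - 1) (by omega) (j - 1)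
      rw [(by omega : i - 1 + 1 = i), sub_add_cancel] at hAC'
      exact hAC' ⟨h1, h2⟩

lemma sep_adj (m n : ℕ) [NeZero n] (hn : 3 ≤ n) (a : Fin m → Fin n → Bool)
    (v x : Fin (m + 1) × Fin n) :
    (sepGraph m n a).Adj v x ↔
      (x = (v.1, v.2 + 1) ∧ hKeep m n a (v.1 : ℕ) v.2) ∨
      (x = (v.1, v.2 - 1) ∧ hKeep m n a (v.1 : ℕ) (v.2 - 1)) ∨
      ((x.1 : ℕ) = (v.1 : ℕ) + 1 ∧ x.2 = v.2 ∧ vKeep m n a (v.1 : ℕ) v.2) ∨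
      ((x.1 : ℕ) + 1 = (v.1 : ℕ) ∧ x.2 = v.2 ∧ vKeep m n a ((v.1 : ℕ) - 1) v.2) := by
  rw [sepGraph, SimpleGraph.fromRel_adj]
  constructor
  · rintro ⟨hne, (⟨h1, h2, h3⟩ | ⟨h1, h2, h3⟩) | (⟨h1, h2, h3⟩ | ⟨h1, h2, h3⟩)⟩
    · exact Or.inl ⟨Prod.ext h1.symm h2, h3⟩
    · exact Or.inr (Or.inr (Or.inl ⟨h2, h1.symm, h3⟩))
    · have hx2 : x.2 = v.2 - 1 := eq_sub_of_add_eq h2.symm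
      refine Or.inr (Or.inl ⟨Prod.ext h1 hx2, ?_⟩)
      rw [h1, hx2] at h3
      exact h3
    · refine Or.inr (Or.inr (Or.inr ⟨h2.symm, h1, ?_⟩))
      have hv1 : ((v.1 : ℕ) - 1) = (x.1 : ℕ) := by omega
      rw [h1] at h3
      rw [hv1]
      exact h3
  · rintro (⟨hx, hk⟩ | ⟨hx, hk⟩ | ⟨h1, h2, hk⟩ | ⟨h1, h2, hk⟩)
    · subst hx
      refine ⟨fun h => fin_add_one_ne hn v.2 (congrArg Prod.snd h).symm,
        Or.inl (Or.inl ⟨rfl, rfl, hk⟩)⟩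
    · subst hx
      refine ⟨fun h => fin_sub_one_ne hn v.2 (congrArg Prod.snd h).symm,
        Or.inr (Or.inl ⟨rfl, (sub_add_cancel v.2 1).symm, hk⟩)⟩
    · refine ⟨fun h => ?_, Or.inl (Or.inr ⟨h2.symm, h1, hk⟩)⟩
      have := congrArg (fun y => ((y.1 : Fin (m + 1)) : ℕ)) h
      omega
    · refine ⟨fun h => ?_, Or.inr (Or.inr ⟨h2, h1.symm, ?_⟩)⟩
      · have := congrArg (fun y => ((y.1 : Fin (m + 1)) : ℕ)) h
        omega
      · have hv1 : ((x.1 : ℕ)) = (v.1 : ℕ) - 1 := by omega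
        rw [h2, hv1]
        exact hk

lemma cyc_adj_succ {n : ℕ} [NeZero n] (hn : 3 ≤ n) (j : Fin n) :
    (SimpleGraph.cycleGraph n).Adj j (j + 1) := by
  rw [SimpleGraph.cycleGraph_adj']
  right
  rw [add_sub_cancel_left, Fin.val_one']
  exact Nat.mod_eq_of_lt (by omega)

lemma sep_le (m n : ℕ) [NeZero n] (hn : 3 ≤ n) (a : Fin m → Fin n → Bool) :
    sepGraph m n a ≤ cylGraph (m + 1) n := by
  intro v x h
  rw [sepGraph, SimpleGraph.fromRel_adj] at h
  obtain ⟨hne, h | h⟩ := h <;>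
    rcases h with ⟨h1, h2, _⟩ | ⟨h1, h2, _⟩
  · rw [cylGraph, SimpleGraph.boxProd_adj]
    right
    have hc := cyc_adj_succ hn v.2
    rw [← h2] at hc
    exact ⟨hc, h1⟩
  · rw [cylGraph, SimpleGraph.boxProd_adj]
    left
    exact ⟨SimpleGraph.pathGraph_adj.mpr (Or.inl h2.symm), h1⟩
  · rw [cylGraph, SimpleGraph.boxProd_adj]
    right
    have hc := (cyc_adj_succ hn x.2).symm
    rw [← h2] at hc
    exact ⟨hc, h1.symm⟩
  · rw [cylGraph, SimpleGraph.boxProd_adj]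
    left
    exact ⟨SimpleGraph.pathGraph_adj.mpr (Or.inr h2.symm), h1.symm⟩

lemma vKeep_pred_iff (m n : ℕ) [NeZero n] (a : Fin m → Fin n → Bool) {i : ℕ} (h : i ≠ 0)
    (j : Fin n) : vKeep m n a (i - 1) j ↔ Nlab m n a i (j - 1) ≠ Nlab m n a i j := by
  unfold vKeep
  simp only [Nlab, if_neg h]

lemma condS_iff (m n : ℕ) [NeZero n] (i0 : Fin (m + 1)) (j : Fin n) (h : (i0 : ℕ) < m)
    (x : Fin (m + 1) × Fin n) :
    ((x.1 : ℕ) = (i0 : ℕ) + 1 ∧ x.2 = j) ↔ x = (⟨(i0 : ℕ) + 1, by omega⟩, j) := by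
  constructor
  · rintro ⟨h1, h2⟩
    exact Prod.ext (Fin.ext h1) h2
  · rintro rfl
    exact ⟨rfl, rfl⟩

lemma condN_iff (m n : ℕ) [NeZero n] (i0 : Fin (m + 1)) (j : Fin n) (h : 1 ≤ (i0 : ℕ))
    (x : Fin (m + 1) × Fin n) :
    ((x.1 : ℕ) + 1 = (i0 : ℕ) ∧ x.2 = j) ↔ x = (⟨(i0 : ℕ) - 1, by omega⟩, j) := by
  constructor
  · rintro ⟨h1, h2⟩
    refine Prod.ext (Fin.ext ?_) h2
    show (x.1 : ℕ) = (i0 : ℕ) - 1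
    omega
  · rintro rfl
    refine ⟨?_, rfl⟩
    show (i0 : ℕ) - 1 + 1 = (i0 : ℕ)
    omega

lemma ncard_EW (m n : ℕ) [NeZero n] (hn : 3 ≤ n) (i0 : Fin (m + 1)) (j : Fin n) :
    ({x : Fin (m + 1) × Fin n | x = (i0, j + 1) ∨ x = (i0, j - 1)}).ncard = 2 := by
  have he : {x : Fin (m + 1) × Fin n | x = (i0, j + 1) ∨ x = (i0, j - 1)}
      = {(i0, j + 1), (i0, j - 1)} := rfl
  rw [he, Set.ncard_pair]
  intro h
  exact fin_add_ne_sub hn j (congrArg Prod.snd h)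

lemma ncard_ES (m n : ℕ) [NeZero n] (hn : 3 ≤ n) (i0 : Fin (m + 1)) (j : Fin n)
    (him : (i0 : ℕ) < m) :
    ({x : Fin (m + 1) × Fin n | x = (i0, j + 1) ∨ ((x.1 : ℕ) = (i0 : ℕ) + 1 ∧ x.2 = j)}).ncard
      = 2 := by
  have he : {x : Fin (m + 1) × Fin n | x = (i0, j + 1) ∨ ((x.1 : ℕ) = (i0 : ℕ) + 1 ∧ x.2 = j)}
      = {(i0, j + 1), ((⟨(i0 : ℕ) + 1, by omega⟩ : Fin (m + 1)), j)} := by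
    ext x
    exact or_congr Iff.rfl (condS_iff m n i0 j him x)
  rw [he, Set.ncard_pair]
  intro h
  exact fin_add_one_ne hn j (congrArg Prod.snd h)

lemma ncard_EN (m n : ℕ) [NeZero n] (hn : 3 ≤ n) (i0 : Fin (m + 1)) (j : Fin n)
    (him : 1 ≤ (i0 : ℕ)) :
    ({x : Fin (m + 1) × Fin n | x = (i0, j + 1) ∨ ((x.1 : ℕ) + 1 = (i0 : ℕ) ∧ x.2 = j)}).ncard
      = 2 := by
  have he : {x : Fin (m + 1) × Fin n | x = (i0, j + 1) ∨ ((x.1 : ℕ) + 1 = (i0 : ℕ) ∧ x.2 = j)}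
      = {(i0, j + 1), ((⟨(i0 : ℕ) - 1, by omega⟩ : Fin (m + 1)), j)} := by
    ext x
    exact or_congr Iff.rfl (condN_iff m n i0 j him x)
  rw [he, Set.ncard_pair]
  intro h
  exact fin_add_one_ne hn j (congrArg Prod.snd h)

lemma ncard_WS (m n : ℕ) [NeZero n] (hn : 3 ≤ n) (i0 : Fin (m + 1)) (j : Fin n)
    (him : (i0 : ℕ) < m) :
    ({x : Fin (m + 1) × Fin n | x = (i0, j - 1) ∨ ((x.1 : ℕ) = (i0 : ℕ) + 1 ∧ x.2 = j)}).ncard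
      = 2 := by
  have he : {x : Fin (m + 1) × Fin n | x = (i0, j - 1) ∨ ((x.1 : ℕ) = (i0 : ℕ) + 1 ∧ x.2 = j)}
      = {(i0, j - 1), ((⟨(i0 : ℕ) + 1, by omega⟩ : Fin (m + 1)), j)} := by
    ext x
    exact or_congr Iff.rfl (condS_iff m n i0 j him x)
  rw [he, Set.ncard_pair]
  intro h
  exact fin_sub_one_ne hn j (congrArg Prod.snd h)

lemma ncard_WN (m n : ℕ) [NeZero n] (hn : 3 ≤ n) (i0 : Fin (m + 1)) (j : Fin n)
    (him : 1 ≤ (i0 : ℕ)) :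
    ({x : Fin (m + 1) × Fin n | x = (i0, j - 1) ∨ ((x.1 : ℕ) + 1 = (i0 : ℕ) ∧ x.2 = j)}).ncard
      = 2 := by
  have he : {x : Fin (m + 1) × Fin n | x = (i0, j - 1) ∨ ((x.1 : ℕ) + 1 = (i0 : ℕ) ∧ x.2 = j)}
      = {(i0, j - 1), ((⟨(i0 : ℕ) - 1, by omega⟩ : Fin (m + 1)), j)} := by
    ext x
    exact or_congr Iff.rfl (condN_iff m n i0 j him x)
  rw [he, Set.ncard_pair]
  intro h
  exact fin_sub_one_ne hn j (congrArg Prod.snd h)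

lemma ncard_SN (m n : ℕ) [NeZero n] (i0 : Fin (m + 1)) (j : Fin n)
    (h1 : 1 ≤ (i0 : ℕ)) (h2 : (i0 : ℕ) < m) :
    ({x : Fin (m + 1) × Fin n |
      ((x.1 : ℕ) = (i0 : ℕ) + 1 ∧ x.2 = j) ∨ ((x.1 : ℕ) + 1 = (i0 : ℕ) ∧ x.2 = j)}).ncard
      = 2 := by
  have he : {x : Fin (m + 1) × Fin n |
        ((x.1 : ℕ) = (i0 : ℕ) + 1 ∧ x.2 = j) ∨ ((x.1 : ℕ) + 1 = (i0 : ℕ) ∧ x.2 = j)}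
      = {((⟨(i0 : ℕ) + 1, by omega⟩ : Fin (m + 1)), j),
         ((⟨(i0 : ℕ) - 1, by omega⟩ : Fin (m + 1)), j)} := by
    ext x
    exact or_congr (condS_iff m n i0 j h2 x) (condN_iff m n i0 j h1 x)
  rw [he, Set.ncard_pair]
  intro h
  have := congrArg (fun p => ((p.1 : Fin (m + 1)) : ℕ)) h
  simp only at this
  omega

lemma master (m n : ℕ) [NeZero n] (hn : 3 ≤ n) (i0 : Fin (m + 1)) (j : Fin n)
    (p q r s : Bool)
    (hp1 : p = true → 1 ≤ (i0 : ℕ)) (hq1 : q = true → 1 ≤ (i0 : ℕ))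
    (hr1 : r = true → (i0 : ℕ) < m) (hs1 : s = true → (i0 : ℕ) < m)
    (hblock : ¬(p = s ∧ r = q)) :
    ({x : Fin (m + 1) × Fin n |
      (x = (i0, j + 1) ∧ q ≠ s) ∨
      (x = (i0, j - 1) ∧ p ≠ r) ∨
      ((x.1 : ℕ) = (i0 : ℕ) + 1 ∧ x.2 = j ∧ r ≠ s) ∨
      ((x.1 : ℕ) + 1 = (i0 : ℕ) ∧ x.2 = j ∧ p ≠ q)}).ncard = 2 := by
  cases p <;> cases q <;> cases r <;> cases s
  all_goals
    simp only [ne_eq, Bool.false_eq_true, Bool.true_eq_false, eq_self_iff_true,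
      not_true, not_false_eq_true, and_true, and_false, true_and, false_and,
      or_false, false_or, not_false_iff, and_self] at hblock ⊢
  all_goals
    (first
           | exact ncard_EW m n hn i0 j
           | exact ncard_ES m n hn i0 j (hr1 rfl)
           | exact ncard_ES m n hn i0 j (hs1 rfl)
           | exact ncard_EN m n hn i0 j (hp1 rfl)
           | exact ncard_EN m n hn i0 j (hq1 rfl)
           | exact ncard_WS m n hn i0 j (hr1 rfl)
           | exact ncard_WS m n hn i0 j (hs1 rfl)
           | exact ncard_WN m n hn i0 j (hp1 rfl)
           | exact ncard_WN m n hn i0 j (hq1 rfl)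
           | exact ncard_SN m n i0 j (hp1 rfl) (hr1 rfl)
           | exact ncard_SN m n i0 j (hp1 rfl) (hs1 rfl)
           | exact ncard_SN m n i0 j (hq1 rfl) (hr1 rfl)
           | exact ncard_SN m n i0 j (hq1 rfl) (hs1 rfl))

end SepAux

/-- For a 0/1 window labeling satisfying FL, AC (and whose 1-windows induce a tree),
the separating edges together with the boundary edges adjacent to 1-windows form a
2-regular spanning subgraph of `P_{m+1} × C_n`. -/
theorem sepGraph_two_regular (m n : ℕ) [NeZero n] (hm : 1 ≤ m) (hn : 3 ≤ n)
    (a : Fin m → Fin n → Bool)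
    (hFL : FLcond m n a) (hAC : ACcond m n a) (hTC : TCcond m n a) :
    sepGraph m n a ≤ cylGraph (m + 1) n ∧
    ∀ v, ((sepGraph m n a).neighborSet v).ncard = 2 := by
  constructor
  · exact SepAux.sep_le m n hn a
  · intro v
    have hiℕ : (v.1 : ℕ) ≤ m := Nat.lt_succ_iff.mp v.1.isLt
    have hset : (sepGraph m n a).neighborSet v =
        {x : Fin (m + 1) × Fin n |
          (x = (v.1, v.2 + 1) ∧
            SepAux.Nlab m n a (v.1 : ℕ) v.2 ≠ extLab m n a (v.1 : ℕ) v.2) ∨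
          (x = (v.1, v.2 - 1) ∧
            SepAux.Nlab m n a (v.1 : ℕ) (v.2 - 1) ≠ extLab m n a (v.1 : ℕ) (v.2 - 1)) ∨
          ((x.1 : ℕ) = (v.1 : ℕ) + 1 ∧ x.2 = v.2 ∧
            extLab m n a (v.1 : ℕ) (v.2 - 1) ≠ extLab m n a (v.1 : ℕ) v.2) ∨
          ((x.1 : ℕ) + 1 = (v.1 : ℕ) ∧ x.2 = v.2 ∧
            SepAux.Nlab m n a (v.1 : ℕ) (v.2 - 1) ≠ SepAux.Nlab m n a (v.1 : ℕ) v.2)} := by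
      ext x
      rw [SimpleGraph.mem_neighborSet, SepAux.sep_adj m n hn a v x, Set.mem_setOf_eq]
      apply or_congr (and_congr_right fun _ => SepAux.hKeep_iff m n a hm hiℕ v.2)
      apply or_congr (and_congr_right fun _ => SepAux.hKeep_iff m n a hm hiℕ (v.2 - 1))
      apply or_congr (and_congr_right fun _ => and_congr_right fun _ => Iff.rfl)
      constructor
      · rintro ⟨h1, h2, h3⟩
        exact ⟨h1, h2, (SepAux.vKeep_pred_iff m n a (by omega) v.2).mp h3⟩
      · rintro ⟨h1, h2, h3⟩
        exact ⟨h1, h2, (SepAux.vKeep_pred_iff m n a (by omega) v.2).mpr h3⟩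
    rw [hset]
    exact SepAux.master m n hn v.1 v.2 _ _ _ _
      SepAux.one_le_of_Nlab_true SepAux.one_le_of_Nlab_true
      SepAux.lt_of_extLab_true SepAux.lt_of_extLab_true
      (SepAux.block m n hm hFL hAC hiℕ v.2)
end
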